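/- arXiv:1809.00649 — 8 statements merged into one kernel-verified Lean document; each statement's English description precedes it below -/
import Mathlib

section
/- If f : [λ]^2 → λ is an i-bounded coloring (each color class has size at most i, with i finite) and λ → (κ)^2_i holds, then there exists a subset A ⊆ λ of order type κ such that f restricted to [A]^2 is injective. (Galvin's trick: the ordinary partition relation implies the rainbow partition relation.) -/
/-!
Choose, for every colour `ξ`, an injection of the at most `i` pairs of colour `ξ` into `Fin i`,
and colour each pair by its image under the injection belonging to its own `f`-colour. Two distinct
pairs with the same `f`-colour then get different new colours, so a set homogeneous for the new
colouring, which `λ → (κ)²_i` provides, is rainbow for `f`.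
-/

open Ordinal Set Cardinal

theorem Cardinal.nonempty_embedding_fin_of_mk_le {α : Type*} {n : ℕ} (h : #α ≤ n) :
    Nonempty (α ↪ Fin n) := by
  rw [← Cardinal.lift_mk_fin, ← Cardinal.lift_id #α] at h
  exact lift_mk_le.mp h

theorem exists_fin_injective_on_fibers {α β : Type*} (f : α → β) (n : ℕ)
    (hf : ∀ b, #{a // f a = b} ≤ n) :
    ∃ g : α → Fin n, ∀ a a', f a = f a' → g a = g a' → a = a' := by
  let emb b : {a // f a = b} ↪ Fin n := (Cardinal.nonempty_embedding_fin_of_mk_le (hf b)).some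
  let g : α → Fin n := fun a => emb (f a) ⟨a, rfl⟩
  have g_eq : ∀ b (x : {a // f a = b}), g x = emb b x := by
    rintro b ⟨a, rfl⟩
    rfl
  refine ⟨g, fun a a' hfa hg => ?_⟩
  rw [g_eq (f a) ⟨a, rfl⟩, g_eq (f a) ⟨a', hfa.symm⟩] at hg
  exact congrArg Subtype.val ((emb (f a)).injective hg)

theorem Ordinal.exists_pair_coloring_injective_on_color_classes {lam : Ordinal} {i : ℕ}
    (hi : 1 ≤ i) {f : Ordinal → Ordinal → Ordinal}
    (hbdd : ∀ ξ : Ordinal,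
      #{p : Ordinal × Ordinal // p.1 < p.2 ∧ p.2 < lam ∧ f p.1 p.2 = ξ} ≤ (i : Cardinal)) :
    ∃ g : Ordinal → Ordinal → Fin i, ∀ a b a' b', a < b → b < lam → a' < b' → b' < lam →
      f a b = f a' b' → g a b = g a' b' → a = a' ∧ b = b' := by
  let F : {p : Ordinal × Ordinal // p.1 < p.2 ∧ p.2 < lam} → Ordinal := fun p => f p.1.1 p.1.2
  have hF : ∀ ξ, #{p // F p = ξ} ≤ i := fun ξ => by
    refine (Cardinal.mk_congr (Equiv.subtypeSubtypeEquivSubtypeInter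
      (fun p : Ordinal × Ordinal => p.1 < p.2 ∧ p.2 < lam) (fun p => f p.1 p.2 = ξ))).trans_le ?_
    simpa only [and_assoc] using hbdd ξ
  obtain ⟨g, hg⟩ := exists_fin_injective_on_fibers F i hF
  refine ⟨fun a b => if hab : a < b ∧ b < lam then g ⟨(a, b), hab⟩ else ⟨0, hi⟩, ?_⟩
  intro a b a' b' hab hb ha'b' hb' hf hgab
  simp only [dif_pos (And.intro hab hb), dif_pos (And.intro ha'b' hb')] at hgab
  exact Prod.ext_iff.mp (congrArg Subtype.val (hg _ _ hf hgab))

/-- Galvin's trick: the ordinary partition relation `λ → (κ)²_i` implies the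
rainbow partition relation `λ →^poly (κ)²_{i-bdd}` for finite `i ≥ 1`. -/
theorem galvin_trick (lam kap : Ordinal) (i : ℕ) (hi : 1 ≤ i)
    -- the partition relation λ → (κ)²_i :
    (hpart : ∀ g : Ordinal → Ordinal → Fin i,
      ∃ h : Ordinal → Ordinal, StrictMonoOn h (Set.Iio kap) ∧
        (∀ j < kap, h j < lam) ∧
        ∃ c : Fin i, ∀ j k, j < k → k < kap → g (h j) (h k) = c)
    -- an i-bounded coloring of pairs from λ :
    (f : Ordinal → Ordinal → Ordinal)
    (hbdd : ∀ ξ : Ordinal,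
      (#{p : Ordinal × Ordinal // p.1 < p.2 ∧ p.2 < lam ∧ f p.1 p.2 = ξ}) ≤ (i : Cardinal)) :
    -- there is a subset of λ of order type κ on which f is injective :
    ∃ h : Ordinal → Ordinal, StrictMonoOn h (Set.Iio kap) ∧
      (∀ j < kap, h j < lam) ∧
      ∀ j k j' k', j < k → k < kap → j' < k' → k' < kap →
        f (h j) (h k) = f (h j') (h k') → j = j' ∧ k = k' := by
  obtain ⟨g, hg⟩ := exists_pair_coloring_injective_on_color_classes hi hbdd
  obtain ⟨h, hmono, hlt, c, hc⟩ := hpart g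
  refine ⟨h, hmono, hlt, fun j k j' k' hjk hk hj'k' hk' hf => ?_⟩
  have hj : j < kap := hjk.trans hk
  have hj' : j' < kap := hj'k'.trans hk'
  obtain ⟨hjj', hkk'⟩ := hg _ _ _ _ (hmono hj hk hjk) (hlt k hk) (hmono hj' hk' hj'k')
    (hlt k' hk') hf ((hc j k hjk hk).trans (hc j' k' hj'k' hk').symm)
  exact ⟨hmono.injOn hj hj' hjj', hmono.injOn hk hk' hkk'⟩
end

section
/- ω₁ does not satisfy the rainbow partition relation ω₁ →^poly (4)^3_{<ω-bdd}: there exists a coloring g : [ω₁]^3 → ω₁ such that every color class of g is finite, but no 4-element subset of ω₁ is rainbow for g. -/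
/-!
Colour `{α, β, γ}` (with `α < β < γ`) by the pair `(γ, max (a(α,γ), a(β,γ)))`, where `a(·,γ)`
injects the countable ordinal `γ` into `ℕ`. A colour fixes `γ` and a bound `n`, and only finitely
many `α < γ` have `a(α,γ) ≤ n`, so colour classes are finite. But for `α₀ < α₁ < α₂ < α₃` the
three pairwise maxima of `a(α₀,α₃), a(α₁,α₃), a(α₂,α₃)` cannot be distinct: two of them equal
the largest of the three numbers.
-/

open Ordinal Set Cardinal

universe u v

theorem not_nodup_max_pairs {α β : Type*} [LinearOrder α] (f : α → β) (x y z : α) :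
    ¬ [f (max x y), f (max x z), f (max y z)].Nodup := by
  simp only [List.nodup_cons, List.mem_cons, List.not_mem_nil, max_def]
  split_ifs <;> grind

theorem Set.InjOn.finite_inter_preimage_Iic {α : Type*} {f : α → ℕ} {s : Set α}
    (hf : InjOn f s) (n : ℕ) : (s ∩ f ⁻¹' Iic n).Finite :=
  Finite.of_finite_image ((finite_Iic n).subset (image_subset_iff.2 inter_subset_right))
    (hf.mono inter_subset_left)

section MaxColoring

variable {κ : Type*} (code : Ordinal → ℕ → κ) (a : Ordinal → Ordinal → ℕ)

/-- The colour `(max {a(α,γ), a(β,γ)}, γ)`, written `code γ (max (a γ α) (a γ β))`. -/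
def maxColoring (α β γ : Ordinal) : κ :=
  code γ (max (a γ α) (a γ β))

theorem finite_maxColoring_fiber {o : Ordinal}
    (hcode : InjOn (Function.uncurry code) (Iio o ×ˢ Set.univ))
    (ha : ∀ γ < o, InjOn (a γ) (Iio γ)) (ξ : κ) :
    {t : Ordinal × Ordinal × Ordinal |
      t.1 < t.2.1 ∧ t.2.1 < t.2.2 ∧ t.2.2 < o ∧ maxColoring code a t.1 t.2.1 t.2.2 = ξ}.Finite := by
  by_contra hinf
  obtain ⟨⟨α₀, β₀, γ₀⟩, -, -, hγ₀, rfl⟩ := Set.Infinite.nonempty hinf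
  set n := max (a γ₀ α₀) (a γ₀ β₀)
  have hS := (ha γ₀ hγ₀).finite_inter_preimage_Iic n
  refine hinf ((hS.prod (hS.prod (finite_singleton γ₀))).subset ?_)
  rintro ⟨α, β, γ⟩ ⟨hαβ, hβγ, hγ, hξ⟩
  obtain ⟨rfl, hn⟩ : γ = γ₀ ∧ max (a γ α) (a γ β) = n :=
    Prod.ext_iff.1 (hcode (x₁ := (γ, _)) (x₂ := (γ₀, n)) ⟨hγ, trivial⟩ ⟨hγ₀, trivial⟩ hξ)
  exact ⟨⟨hαβ.trans hβγ, (le_max_left _ _).trans hn.le⟩, ⟨hβγ, (le_max_right _ _).trans hn.le⟩,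
    rfl⟩

end MaxColoring

namespace Ordinal

theorem countable_Iio_of_lt_omega_one {γ : Ordinal} (hγ : γ < ω₁) : (Iio γ).Countable := by
  rw [← le_aleph0_iff_set_countable, Cardinal.mk_Iio_ordinal, lift_le_aleph0, ← lt_aleph_one_iff,
    ← lt_ord, ord_aleph]
  exact hγ

theorem omega0_mul_add_natCast_inj {γ γ' : Ordinal} {m n : ℕ} :
    ω * γ + m = ω * γ' + n ↔ γ = γ' ∧ m = n := by
  refine ⟨fun h => ⟨?_, ?_⟩, by rintro ⟨rfl, rfl⟩; rfl⟩
  · simpa [mul_add_div _ omega0_ne_zero, div_eq_zero_of_lt (natCast_lt_omega0 _)] using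
      congrArg (· / ω) h
  · simpa [mul_add_mod_self, mod_eq_of_lt (natCast_lt_omega0 _)] using congrArg (· % ω) h

theorem IsInitial.omega0_mul_add_natCast_lt {o γ : Ordinal} (ho : o.IsInitial) (hω : ω < o)
    (hγ : γ < o) (n : ℕ) : ω * γ + n < o :=
  ho.isPrincipal_add hω.le (ho.isPrincipal_mul hω.le hω hγ) ((natCast_lt_omega0 n).trans hω)

theorem exists_injOn_mapsTo_Iio_omega_one :
    ∃ e : Ordinal.{u} → Ordinal.{v}, MapsTo e (Iio ω₁) (Iio ω₁) ∧ InjOn e (Iio ω₁) := by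
  have : ∀ x : Ordinal.{u}, x < ω₁ → ∃ y : Ordinal.{v}, lift.{u} y = lift.{v} x := fun x hx =>
    mem_range_lift_of_le (a := ω₁) (by simpa using hx.le)
  choose! e he using this
  refine ⟨e, fun x hx => ?_, fun x hx x' hx' h => ?_⟩
  · simpa [← lift_lt_omega_one.{v, u}, he x hx] using hx
  · simpa [he x hx, he x' hx'] using congrArg lift.{u} h

theorem exists_injOn_omega_one_prod_nat :
    ∃ code : Ordinal.{u} → ℕ → Ordinal.{v},
      (∀ γ < ω₁, ∀ n, code γ n < ω₁) ∧ InjOn (Function.uncurry code) (Iio ω₁ ×ˢ Set.univ) := by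
  obtain ⟨e, he_maps, he_inj⟩ := exists_injOn_mapsTo_Iio_omega_one.{u, v}
  have hlt : ∀ γ < ω₁, ∀ n : ℕ, ω * γ + n < ω₁ := fun γ hγ n =>
    (isInitial_omega 1).omega0_mul_add_natCast_lt omega0_lt_omega_one hγ n
  refine ⟨fun γ n => e (ω * γ + n), fun γ hγ n => he_maps (hlt γ hγ n), ?_⟩
  rintro ⟨γ, m⟩ ⟨hγ, -⟩ ⟨γ', n⟩ ⟨hγ', -⟩ h
  simpa using omega0_mul_add_natCast_inj.1 (he_inj (hlt γ hγ m) (hlt γ' hγ' n) h)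

end Ordinal

/-- `ω₁ ↛^poly (4)³_{<ω-bdd}`: there is a coloring of triples from `ω₁` with all
color classes finite such that no 4-element subset of `ω₁` is rainbow. -/
theorem omega1_not_poly_four_triples :
    ∃ g : Ordinal → Ordinal → Ordinal → Ordinal,
      -- g maps triples from ω₁ into ω₁ :
      (∀ α β γ, α < β → β < γ → γ < (Cardinal.aleph 1).ord →
        g α β γ < (Cardinal.aleph 1).ord) ∧
      -- every color class is finite :
      (∀ ξ : Ordinal,
        {t : Ordinal × Ordinal × Ordinal |
          t.1 < t.2.1 ∧ t.2.1 < t.2.2 ∧ t.2.2 < (Cardinal.aleph 1).ord ∧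
          g t.1 t.2.1 t.2.2 = ξ}.Finite) ∧
      -- no 4-element subset is rainbow: among the four triples from
      -- α₀ < α₁ < α₂ < α₃ two distinct ones get the same color :
      (∀ α₀ α₁ α₂ α₃, α₀ < α₁ → α₁ < α₂ → α₂ < α₃ →
        α₃ < (Cardinal.aleph 1).ord →
        ¬ ([g α₀ α₁ α₂, g α₀ α₁ α₃, g α₀ α₂ α₃, g α₁ α₂ α₃].Nodup)) := by
  simp only [ord_aleph]
  obtain ⟨code, hcode_lt, hcode_inj⟩ := exists_injOn_omega_one_prod_nat
  choose! a ha using fun γ (hγ : γ < ω₁) =>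
    countable_iff_exists_injOn.1 (countable_Iio_of_lt_omega_one hγ)
  exact ⟨maxColoring code a, fun _ _ γ _ _ hγ => hcode_lt γ hγ _,
    finite_maxColoring_fiber code a hcode_inj ha,
    fun _ _ _ _ _ _ _ _ h => not_nodup_max_pairs _ _ _ _ (List.nodup_cons.1 h).2⟩
end

section
/- If κ is a singular cardinal of cofinality λ < κ, then κ⁺ does not satisfy the rainbow partition relation κ⁺ →^poly (λ⁺ + 1)^2_{<κ-bdd}: there exists a coloring f : [κ⁺]^2 → κ⁺ all of whose color classes have size less than κ, such that no subset of κ⁺ of order type λ⁺ + 1 is rainbow for f. -/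
open Ordinal Set Cardinal

/-!
Every `β < κ⁺` has size at most `κ`, so it splits into `cf κ` pieces of size `< κ`: inject `β`
into `κ` and send `γ < κ` to some `n < cf κ` with `γ ≤ c n`, for a cofinal sequence `c` in `κ`.
Colour `α < β` by `β` together with the piece of `β` containing `α`; a colour class then lies
inside one piece. If `h` enumerates a set of order type `(cf κ)⁺ + 1`, the `(cf κ)⁺` pairs ending
in its top element receive at most `cf κ` colours, so two of them collide.
-/

namespace Ordinal

theorem eq_and_eq_of_mul_add_eq {a b b' c c' : Ordinal} (hc : c < a) (hc' : c' < a)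
    (h : a * b + c = a * b' + c') : b = b' ∧ c = c' := by
  have ha : a ≠ 0 := (pos_of_gt hc).ne'
  constructor
  · simpa only [mul_add_div _ ha, div_eq_zero_of_lt hc, div_eq_zero_of_lt hc', add_zero]
      using congrArg (· / a) h
  · simpa only [mul_add_mod_self, mod_eq_of_lt hc, mod_eq_of_lt hc'] using congrArg (· % a) h

theorem exists_injOn_Iio_of_card_le {β γ : Ordinal.{u}} (h : β.card ≤ γ.card) :
    ∃ e : Ordinal → Ordinal, MapsTo e (Iio β) (Iio γ) ∧ InjOn e (Iio β) := by
  obtain ⟨E⟩ : #(Iio β) ≤ #(Iio γ) := by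
    rwa [Cardinal.mk_Iio_ordinal, Cardinal.mk_Iio_ordinal, Cardinal.lift_le]
  classical
  refine ⟨fun α => if hα : α < β then E ⟨α, hα⟩ else 0, fun α hα => ?_,
    fun α hα α' hα' hαα' => ?_⟩
  · simp only [dif_pos (show α < β from hα)]
    exact (E _).2
  · simp only [dif_pos (show α < β from hα), dif_pos (show α' < β from hα')] at hαα'
    exact congrArg Subtype.val (E.injective (Subtype.ext hαα'))

theorem exists_ne_map_eq_of_card_lt_of_maps_to {T L : Ordinal.{u}} (hc : L.card < T.card)
    {g : Ordinal → Ordinal} (hg : MapsTo g (Iio T) (Iio L)) :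
    ∃ i < T, ∃ j < T, i ≠ j ∧ g i = g j := by
  by_contra! hinj
  have := mk_le_of_injective <| hg.restrict_inj.2 fun i hi j hj hij =>
    by_contra fun hne => hinj i hi j hj hne hij
  rw [Cardinal.mk_Iio_ordinal, Cardinal.mk_Iio_ordinal, Cardinal.lift_le] at this
  exact this.not_gt hc

theorem exists_mapsTo_Iio_ord_cof_bounded_fibers {o : Ordinal.{u}} (ho : Order.IsSuccLimit o) :
    ∃ b : Ordinal → Ordinal, MapsTo b (Iio o) (Iio o.cof.ord) ∧
      ∀ n, ∃ δ < o, ∀ γ < o, b γ = n → γ < δ := by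
  obtain ⟨s, hs⟩ := exists_isFundamentalSeq (o := o) rfl
  have hcofinal : ∀ γ < o, ∃ i : Iio o.cof.ord, γ ≤ s i := fun γ hγ => by
    obtain ⟨_, ⟨i, rfl⟩, hi⟩ := hs.isCofinal_range ⟨γ, hγ⟩
    exact ⟨i, hi⟩
  have : Nonempty (Iio o.cof.ord) := ⟨⟨0, ord_pos.2 (cof_pos.2 ho.bot_lt)⟩⟩
  choose! b hb using hcofinal
  refine ⟨fun γ => b γ, fun γ _ => (b γ).2, fun n => ?_⟩
  by_cases hn : n < o.cof.ord
  · refine ⟨s ⟨n, hn⟩ + 1, ho.add_one_lt (s _).2, fun γ hγ hbγ => ?_⟩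
    rw [Order.lt_add_one_iff]
    convert hb γ hγ
    exact Subtype.ext hbγ.symm
  · exact ⟨0, ho.bot_lt, fun γ _ hbγ => absurd (hbγ ▸ (b γ).2) hn⟩

end Ordinal

namespace Cardinal

theorem exists_partition_Iio_of_card_le {κ : Cardinal.{u}} (hκ : ℵ₀ ≤ κ) {β : Ordinal.{u}}
    (hβ : β.card ≤ κ) :
    ∃ P : Ordinal → Ordinal, MapsTo P (Iio β) (Iio κ.ord.cof.ord) ∧
      ∀ n, #{α // α < β ∧ P α = n} < lift.{u + 1} κ := by
  obtain ⟨e, he_maps, he_inj⟩ :=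
    exists_injOn_Iio_of_card_le (β := β) (γ := κ.ord) (by rwa [card_ord])
  obtain ⟨b, hb_maps, hb_fibers⟩ := exists_mapsTo_Iio_ord_cof_bounded_fibers (isSuccLimit_ord hκ)
  refine ⟨b ∘ e, hb_maps.comp he_maps, fun n => ?_⟩
  obtain ⟨δ, hδ, hfiber⟩ := hb_fibers n
  have hmaps : MapsTo e {α | α < β ∧ b (e α) = n} (Iio δ) := fun α hα =>
    hfiber _ (he_maps hα.1) hα.2
  calc #{α // α < β ∧ b (e α) = n}
      ≤ #(Iio δ) := mk_le_of_injective <| hmaps.restrict_inj.2 <| he_inj.mono fun _ h => h.1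
    _ = lift δ.card := mk_Iio_ordinal δ
    _ < lift κ := lift_lt.2 (lt_ord.1 hδ)

end Cardinal

/-- The colour of `α < β` is the pair `(β, P β α)`, encoded as `a * β + P β α` where `P β α < a`. -/
def partitionColoring (a : Ordinal.{u}) (P : Ordinal.{u} → Ordinal.{u} → Ordinal.{u})
    (α β : Ordinal.{u}) : Ordinal.{max u v} :=
  Ordinal.lift.{v} (a * β + P β α)

section partitionColoring

variable {a B : Ordinal.{u}} {P : Ordinal.{u} → Ordinal.{u} → Ordinal.{u}}

theorem eq_and_eq_of_partitionColoring_eq (hP : ∀ β < B, MapsTo (P β) (Iio β) (Iio a))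
    {α β α' β' : Ordinal.{u}} (hαβ : α < β) (hβ : β < B) (hαβ' : α' < β') (hβ' : β' < B)
    (h : partitionColoring.{u, v} a P α β = partitionColoring a P α' β') :
    β = β' ∧ P β α = P β' α' :=
  eq_and_eq_of_mul_add_eq (hP β hβ hαβ) (hP β' hβ' hαβ') (Ordinal.lift_inj.1 h)

theorem mk_partitionColoring_eq_lt {c : Cardinal.{u + 1}} (hc : c ≠ 0)
    (hP : ∀ β < B, MapsTo (P β) (Iio β) (Iio a))
    (hsmall : ∀ β < B, ∀ n, #{α // α < β ∧ P β α = n} < c) (ξ : Ordinal.{max u v}) :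
    #{p : Ordinal × Ordinal //
      p.1 < p.2 ∧ p.2 < B ∧ partitionColoring.{u, v} a P p.1 p.2 = ξ} < c := by
  rcases isEmpty_or_nonempty {p : Ordinal × Ordinal //
      p.1 < p.2 ∧ p.2 < B ∧ partitionColoring.{u, v} a P p.1 p.2 = ξ}
    with hempty | ⟨⟨⟨α₀, β₀⟩, hαβ₀, hβ₀, rfl⟩⟩
  · rw [mk_eq_zero]
    exact pos_iff_ne_zero.2 hc
  have hfiber : ∀ p : {p : Ordinal × Ordinal // p.1 < p.2 ∧ p.2 < B ∧
      partitionColoring.{u, v} a P p.1 p.2 = partitionColoring a P α₀ β₀},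
      p.1.2 = β₀ ∧ p.1.1 < β₀ ∧ P β₀ p.1.1 = P β₀ α₀ := by
    rintro ⟨⟨α, β⟩, hαβ, hβ, h⟩
    obtain ⟨rfl, hn⟩ := eq_and_eq_of_partitionColoring_eq hP hαβ hβ hαβ₀ hβ₀ h
    exact ⟨rfl, hαβ, hn⟩
  refine (mk_le_of_injective (f := fun p => ⟨p.1.1, (hfiber p).2⟩) fun p q hpq => ?_).trans_lt
    (hsmall β₀ hβ₀ (P β₀ α₀))
  exact Subtype.ext (Prod.ext (congrArg Subtype.val hpq) ((hfiber p).1.trans (hfiber q).1.symm))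

end partitionColoring

theorem succ_singular_not_poly_general (κ : Cardinal.{0}) (hκ : ℵ₀ ≤ κ) :
    ∃ f : Ordinal → Ordinal → Ordinal,
      -- every color class has size < κ :
      (∀ ξ : Ordinal,
        (#{p : Ordinal × Ordinal //
            p.1 < p.2 ∧ p.2 < (Order.succ κ).ord ∧ f p.1 p.2 = ξ}) <
          Cardinal.lift.{1} κ) ∧
      -- no subset of κ⁺ of order type λ⁺ + 1 is rainbow for f :
      (∀ h : Ordinal → Ordinal,
        StrictMonoOn h (Set.Iio ((Order.succ ((κ.ord).cof)).ord + 1)) →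
        (∀ j < (Order.succ ((κ.ord).cof)).ord + 1, h j < (Order.succ κ).ord) →
        ∃ i j i' j',
          i < j ∧ j < (Order.succ ((κ.ord).cof)).ord + 1 ∧
          i' < j' ∧ j' < (Order.succ ((κ.ord).cof)).ord + 1 ∧
          (i, j) ≠ (i', j') ∧ f (h i) (h j) = f (h i') (h j')) := by
  choose! P hP_maps hP_small using fun β (hβ : β < (Order.succ κ).ord) =>
    exists_partition_Iio_of_card_le hκ (Order.lt_succ_iff.1 (lt_ord.1 hβ))
  have hκ0 : Cardinal.lift.{1} κ ≠ 0 := by simpa using (aleph0_pos.trans_le hκ).ne'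
  refine ⟨partitionColoring κ.ord.cof.ord P, mk_partitionColoring_eq_lt hκ0 hP_maps hP_small,
    fun h hmono hbd => ?_⟩
  set T := (Order.succ κ.ord.cof).ord
  have hT : T < T + 1 := lt_add_one T
  have hmaps : MapsTo (fun i => P (h T) (h i)) (Iio T) (Iio κ.ord.cof.ord) := fun i hi =>
    hP_maps (h T) (hbd T hT) (hmono (mem_Iio.2 (lt_trans hi hT)) (mem_Iio.2 hT) hi)
  obtain ⟨i, hi, i', hi', hne, heq⟩ :=
    exists_ne_map_eq_of_card_lt_of_maps_to (by simp [T]) hmaps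
  exact ⟨i, T, i', T, hi, hT, hi', hT, by simpa using hne, by simp only [partitionColoring, heq]⟩

/-- If `κ` is a singular cardinal of cofinality `λ < κ`, then
`κ⁺ ↛^poly (λ⁺ + 1)²_{<κ-bdd}`: there is a `<κ`-bounded coloring of pairs from
`κ⁺` such that no subset of order type `λ⁺ + 1` is rainbow. -/
theorem succ_singular_not_poly (κ : Cardinal.{0}) (hκ : ℵ₀ ≤ κ)
    (hsing : (κ.ord).cof < κ) :
    ∃ f : Ordinal → Ordinal → Ordinal,
      -- every color class has size < κ :
      (∀ ξ : Ordinal,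
        (#{p : Ordinal × Ordinal //
            p.1 < p.2 ∧ p.2 < (Order.succ κ).ord ∧ f p.1 p.2 = ξ}) <
          Cardinal.lift.{1} κ) ∧
      -- no subset of κ⁺ of order type λ⁺ + 1 is rainbow for f :
      (∀ h : Ordinal → Ordinal,
        StrictMonoOn h (Set.Iio ((Order.succ ((κ.ord).cof)).ord + 1)) →
        (∀ j < (Order.succ ((κ.ord).cof)).ord + 1, h j < (Order.succ κ).ord) →
        ∃ i j i' j',
          i < j ∧ j < (Order.succ ((κ.ord).cof)).ord + 1 ∧
          i' < j' ∧ j' < (Order.succ ((κ.ord).cof)).ord + 1 ∧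
          (i, j) ≠ (i', j') ∧ f (h i) (h j) = f (h i') (h j')) :=
  succ_singular_not_poly_general κ hκ
end

section
/- Let κ be a regular uncountable cardinal. If κ →^poly (κ)^2_{reg-bdd} holds, then every C-sequence on κ is trivial: for every sequence ⟨C_α : α ∈ lim(κ)⟩ with each C_α a club subset of α, there exists a club D ⊆ κ such that for every α < κ there exists β < κ with D ∩ α ⊆ C_β. -/
open Ordinal Set Cardinal

/-- `C` is a club (closed unbounded) subset of the ordinal `o`. -/
def IsClubIn (C : Set Ordinal) (o : Ordinal) : Prop :=
  C ⊆ Set.Iio o ∧ (∀ α < o, ∃ β ∈ C, α < β) ∧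
    (∀ α < o, Order.IsSuccLimit α → (∀ β < α, ∃ γ ∈ C, β < γ ∧ γ < α) → α ∈ C)

/-- `S` is stationary in the ordinal `o`. -/
def IsStatIn (S : Set Ordinal) (o : Ordinal) : Prop :=
  ∀ C : Set Ordinal, IsClubIn C o → (S ∩ C).Nonempty

/-- `f` is a normal coloring of pairs below `o`: equal colors have equal maxima. -/
def IsNormal2 (f : Ordinal → Ordinal → Ordinal) (o : Ordinal) : Prop :=
  ∀ a b a' b', a < b → b < o → a' < b' → b' < o → f a b = f a' b' → b = b'

/-- `f` is regressively bounded on pairs below `κ.ord`. -/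
def RegBdd (f : Ordinal → Ordinal → Ordinal) (κ : Cardinal) : Prop :=
  ∃ lam : Cardinal, lam < κ ∧
    IsStatIn {α : Ordinal | lam ≤ α.cof} κ.ord ∧
    ∀ α < κ.ord, lam ≤ Ordinal.cof α →
      ∀ i : Ordinal, ∃ b < α, ∀ β < α, f β α = i → β < b

/-- `f` is injective on pairs from `A` ("A is rainbow for f"). -/
def RainbowOn (f : Ordinal → Ordinal → Ordinal) (A : Set Ordinal) : Prop :=
  ∀ a ∈ A, ∀ b ∈ A, ∀ a' ∈ A, ∀ b' ∈ A,
    a < b → a' < b' → f a b = f a' b' → a = a' ∧ b = b'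

/-! Colour a pair `β < α` by `α·α + c`, where `c` is the least point of `C α` above `β` when `α`
is a limit and `c = 0` otherwise. This colouring is normal, and regressively bounded with `λ = ℵ₀`:
below a limit `α`, a colour class is bounded by the point of `C α` that it names. Let `A` be a
rainbow set of size `κ` and `D` the club of limit points of `A`. A non-limit member of `A` has at
most one member of `A` below it, so `A` has limit members `α` cofinally in `κ`. If some `β ∈ D`
below such an `α` were missing from `C α`, the closed set `C α` would leave a gap below `β`; two
members of `A` inside that gap get the same colour with `α`. Hence `D ∩ α ⊆ C α`. -/

universe u v

open Order

section Clubs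

variable {S : Set Ordinal.{u}} {o β : Ordinal.{u}}

def accPoints (S : Set Ordinal) (o : Ordinal) : Set Ordinal :=
  {β | β < o ∧ IsSuccLimit β ∧ ∀ y < β, ∃ a ∈ S, y < a ∧ a < β}

noncomputable def nextAbove (S : Set Ordinal) (β : Ordinal) : Ordinal :=
  sInf {γ ∈ S | β < γ}

theorem nextAbove_mem (h : ∃ γ ∈ S, β < γ) : nextAbove S β ∈ S ∧ β < nextAbove S β :=
  csInf_mem (s := {γ ∈ S | β < γ}) h

theorem nextAbove_eq_of_forall_lt {β₁ β₂ : Ordinal} (h₁₂ : β₁ ≤ β₂)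
    (h : ∀ γ ∈ S, β₁ < γ → β₂ < γ) : nextAbove S β₁ = nextAbove S β₂ := by
  unfold nextAbove
  congr 1
  ext γ
  exact ⟨fun hγ => ⟨hγ.1, h γ hγ.1 hγ.2⟩, fun hγ => ⟨hγ.1, h₁₂.trans_lt hγ.2⟩⟩

theorem isSuccLimit_of_forall_exists_between (hβ : β ≠ 0)
    (h : ∀ y < β, ∃ a, y < a ∧ a < β) : IsSuccLimit β :=
  (isSuccLimit_iff β).2 ⟨by simpa using hβ, fun y hy =>
    let ⟨_, hya, haβ⟩ := h y hy.1
    hy.2 hya haβ⟩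

theorem exists_mem_accPoints_gt {κ : Cardinal.{u}} (hreg : κ.IsRegular) (hunc : ℵ₀ < κ)
    (hSo : S ⊆ Iio κ.ord) (hS : ∀ y < κ.ord, ∃ a ∈ S, y < a) {x : Ordinal} (hx : x < κ.ord) :
    ∃ β ∈ accPoints S κ.ord, x < β := by
  set F := nextAbove S
  have hF : ∀ y < κ.ord, F y ∈ S ∧ y < F y := fun y hy => nextAbove_mem (hS y hy)
  have hiter : ∀ n, F^[n] x < κ.ord := by
    intro n
    induction n with
    | zero => exact hx
    | succ n ih => rw [Function.iterate_succ_apply']; exact hSo (hF _ ih).1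
  have hxβ : x < nfp F x := (hF x hx).2.trans_le (iterate_le_nfp F x 1)
  have hacc : ∀ y < nfp F x, ∃ a ∈ S, y < a ∧ a < nfp F x := by
    intro y hy
    obtain ⟨n, hn⟩ := lt_nfp_iff.1 hy
    refine ⟨F^[n + 1] x, ?_, ?_, ?_⟩
    · rw [Function.iterate_succ_apply']; exact (hF _ (hiter n)).1
    · rw [Function.iterate_succ_apply']; exact hn.trans (hF _ (hiter n)).2
    · calc F^[n + 1] x < F^[n + 2] x := by
            rw [Function.iterate_succ_apply' F (n + 1)]; exact (hF _ (hiter (n + 1))).2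
        _ ≤ nfp F x := iterate_le_nfp F x _
  refine ⟨nfp F x, ⟨?_, isSuccLimit_of_forall_exists_between hxβ.ne_bot
    fun y hy => (hacc y hy).imp fun _ ha => ha.2, hacc⟩, hxβ⟩
  exact nfp_lt_ord_of_isRegular hreg hunc.ne' (fun y hy => hSo (hF y hy).1) hx

theorem accPoints_subset (hS : IsClubIn S o) : accPoints S o ⊆ S :=
  fun _ hβ => hS.2.2 _ hβ.1 hβ.2.1 hβ.2.2

theorem isClubIn_accPoints {κ : Cardinal.{u}} (hreg : κ.IsRegular) (hunc : ℵ₀ < κ)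
    (hSo : S ⊆ Iio κ.ord) (hS : ∀ y < κ.ord, ∃ a ∈ S, y < a) :
    IsClubIn (accPoints S κ.ord) κ.ord := by
  refine ⟨fun β hβ => hβ.1, fun x hx => exists_mem_accPoints_gt hreg hunc hSo hS hx, ?_⟩
  intro α hα hlim hcl
  refine ⟨hα, hlim, fun y hy => ?_⟩
  obtain ⟨γ, hγ, hyγ, hγα⟩ := hcl y hy
  obtain ⟨a, haS, hya, haγ⟩ := hγ.2.2 y hyγ
  exact ⟨a, haS, hya, haγ.trans hγα⟩

theorem isStatIn_aleph0_le_cof {κ : Cardinal.{u}} (hreg : κ.IsRegular) (hunc : ℵ₀ < κ) :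
    IsStatIn {α : Ordinal | ℵ₀ ≤ α.cof} κ.ord := by
  intro E hE
  obtain ⟨β, hβ, -⟩ := exists_mem_accPoints_gt hreg hunc hE.1 hE.2.1
    (isSuccLimit_ord hreg.aleph0_le).bot_lt
  exact ⟨β, (aleph0_le_cof_iff.trans one_lt_cof_iff).2 hβ.2.1, accPoints_subset hE hβ⟩

theorem exists_mem_gt_of_mk_eq {κ : Cardinal.{u}} (hκ : ℵ₀ ≤ κ) {A : Set Ordinal.{u}}
    (hA : #A = lift.{u + 1} κ) {x : Ordinal} (hx : x < κ.ord) : ∃ a ∈ A, x < a := by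
  by_contra! h
  have hsub : A ⊆ Iio (succ x) := fun a ha => lt_succ_iff.2 (h a ha)
  have := Cardinal.mk_le_mk_of_subset hsub
  rw [hA, Cardinal.mk_Iio_ordinal, Cardinal.lift_le] at this
  exact this.not_gt (lt_ord.1 ((isSuccLimit_ord hκ).succ_lt hx))

end Clubs

section Coloring

theorem mul_self_add_lt_mul_self_add {α α' x x' : Ordinal} (hx : x < α) (hαα' : α < α') :
    α * α + x < α' * α' + x' :=
  calc α * α + x < α * α + α := (add_lt_add_iff_left _).2 hx
    _ = α * succ α := (mul_succ α α).symm
    _ ≤ α * α' := mul_le_mul_right (succ_le_of_lt hαα') α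
    _ ≤ α' * α' := mul_le_mul_left hαα'.le α'
    _ ≤ α' * α' + x' := le_self_add

theorem mul_self_add_inj {α α' x x' : Ordinal} (hx : x < α) (hx' : x' < α')
    (h : α * α + x = α' * α' + x') : α = α' ∧ x = x' := by
  rcases lt_trichotomy α α' with hlt | rfl | hgt
  · exact absurd h (mul_self_add_lt_mul_self_add hx hlt).ne
  · exact ⟨rfl, (add_right_inj _).1 h⟩
  · exact absurd h.symm (mul_self_add_lt_mul_self_add hx' hgt).ne

open Classical in
noncomputable def cseqStep (C : Ordinal → Set Ordinal) (β α : Ordinal) : Ordinal :=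
  if IsSuccLimit α then nextAbove (C α) β else 0

noncomputable def cseqColoring (C : Ordinal.{u} → Set Ordinal.{u}) (β α : Ordinal.{u}) :
    Ordinal.{max u v} :=
  lift.{v} (α * α + cseqStep C β α)

variable {C : Ordinal.{u} → Set Ordinal.{u}}

theorem cseqStep_of_isSuccLimit {β α : Ordinal} (hα : IsSuccLimit α) :
    cseqStep C β α = nextAbove (C α) β := if_pos hα

theorem cseqStep_of_not_isSuccLimit {β α : Ordinal} (hα : ¬ IsSuccLimit α) :
    cseqStep C β α = 0 := if_neg hα

theorem cseqStep_mem {β α : Ordinal} (hα : IsSuccLimit α) (hC : IsClubIn (C α) α) (hβ : β < α) :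
    cseqStep C β α ∈ C α ∧ β < cseqStep C β α := by
  rw [cseqStep_of_isSuccLimit hα]
  exact nextAbove_mem (hC.2.1 β hβ)

theorem cseqStep_lt {β α : Ordinal} (hC : IsSuccLimit α → IsClubIn (C α) α) (hβ : β < α) :
    cseqStep C β α < α := by
  by_cases hα : IsSuccLimit α
  · exact (hC hα).1 (cseqStep_mem hα (hC hα) hβ).1
  · exact (cseqStep_of_not_isSuccLimit hα).trans_lt (pos_of_gt hβ)

theorem cseqColoring_inj {β α β' α' : Ordinal} (hC : IsSuccLimit α → IsClubIn (C α) α)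
    (hC' : IsSuccLimit α' → IsClubIn (C α') α') (hβ : β < α) (hβ' : β' < α')
    (h : cseqColoring.{u, v} C β α = cseqColoring C β' α') :
    α = α' ∧ cseqStep C β α = cseqStep C β' α' :=
  mul_self_add_inj (cseqStep_lt hC hβ) (cseqStep_lt hC' hβ') (Ordinal.lift_inj.1 h)

end Coloring

section Rainbow

variable {C : Ordinal.{u} → Set Ordinal.{u}} {o : Ordinal.{u}}

theorem isNormal2_cseqColoring (hC : ∀ α < o, IsSuccLimit α → IsClubIn (C α) α) :
    IsNormal2 (cseqColoring.{u, v} C) o :=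
  fun _ _ _ _ hab hb ha'b' hb' h => (cseqColoring_inj (hC _ hb) (hC _ hb') hab ha'b' h).1

theorem regBdd_cseqColoring {κ : Cardinal.{u}} (hreg : κ.IsRegular) (hunc : ℵ₀ < κ)
    (hC : ∀ α < κ.ord, IsSuccLimit α → IsClubIn (C α) α) :
    RegBdd (cseqColoring.{u, v} C) κ := by
  refine ⟨ℵ₀, hunc, isStatIn_aleph0_le_cof hreg hunc, fun α hα hcof i => ?_⟩
  have hlim : IsSuccLimit α := (aleph0_le_cof_iff.trans one_lt_cof_iff).1 hcof
  by_cases hi : ∃ β₀ < α, cseqColoring C β₀ α = i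
  · obtain ⟨β₀, hβ₀, rfl⟩ := hi
    refine ⟨cseqStep C β₀ α, cseqStep_lt (hC α hα) hβ₀, fun β hβ h => ?_⟩
    rw [← (cseqColoring_inj (hC α hα) (hC α hα) hβ hβ₀ h).2]
    exact (cseqStep_mem hlim (hC α hα hlim) hβ).2
  · exact ⟨0, hlim.bot_lt, fun β hβ h => absurd ⟨β, hβ, h⟩ hi⟩

variable {A : Set Ordinal.{u}}

theorem RainbowOn.isSuccLimit_of_lt (hA : RainbowOn (cseqColoring.{u, v} C) A) {a a' c : Ordinal}
    (ha : a ∈ A) (ha' : a' ∈ A) (hc : c ∈ A) (haa' : a < a') (ha'c : a' < c) :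
    IsSuccLimit c := by
  by_contra hlim
  have h : cseqColoring.{u, v} C a c = cseqColoring C a' c := by
    simp only [cseqColoring, cseqStep_of_not_isSuccLimit hlim]
  exact haa'.ne (hA a ha c hc a' ha' c hc (haa'.trans ha'c) ha'c h).1

theorem RainbowOn.accPoints_inter_Iio_subset (hA : RainbowOn (cseqColoring.{u, v} C) A)
    {α : Ordinal} (hαA : α ∈ A) (hlim : IsSuccLimit α) (hC : IsClubIn (C α) α) :
    accPoints A o ∩ Iio α ⊆ C α := by
  rintro β ⟨hβ, hβα⟩
  by_contra hβC
  obtain ⟨s, hsβ, hs⟩ : ∃ s < β, ∀ γ ∈ C α, s < γ → β ≤ γ := by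
    by_contra! h
    exact hβC (hC.2.2 β hβα hβ.2.1 h)
  obtain ⟨β₁, hβ₁A, hsβ₁, hβ₁β⟩ := hβ.2.2 s hsβ
  obtain ⟨β₂, hβ₂A, hβ₁β₂, hβ₂β⟩ := hβ.2.2 β₁ hβ₁β
  have h : cseqColoring.{u, v} C β₁ α = cseqColoring C β₂ α := by
    simp only [cseqColoring, cseqStep_of_isSuccLimit hlim, nextAbove_eq_of_forall_lt hβ₁β₂.le
      fun γ hγ hβ₁γ => hβ₂β.trans_le (hs γ hγ (hsβ₁.trans hβ₁γ))]
  exact hβ₁β₂.ne (hA β₁ hβ₁A α hαA β₂ hβ₂A α hαA (hβ₁β.trans hβα) (hβ₂β.trans hβα) h).1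

end Rainbow

/-- If `κ` is regular uncountable and `κ →^poly (κ)²_{reg-bdd}` holds, then every
C-sequence on `κ` is trivial. -/
theorem poly_regbdd_implies_trivial_Csequence (κ : Cardinal.{0})
    (hreg : κ.IsRegular) (hunc : ℵ₀ < κ)
    (hpoly : ∀ f : Ordinal → Ordinal → Ordinal, IsNormal2 f κ.ord → RegBdd f κ →
      ∃ A : Set Ordinal, A ⊆ Set.Iio κ.ord ∧ #A = Cardinal.lift.{1} κ ∧ RainbowOn f A)
    (C : Ordinal → Set Ordinal)
    (hC : ∀ α < κ.ord, Order.IsSuccLimit α → IsClubIn (C α) α) :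
    ∃ D : Set Ordinal, IsClubIn D κ.ord ∧
      ∀ α < κ.ord, ∃ β, β < κ.ord ∧ Order.IsSuccLimit β ∧ D ∩ Set.Iio α ⊆ C β := by
  obtain ⟨A, hAκ, hAcard, hA⟩ :=
    hpoly (cseqColoring C) (isNormal2_cseqColoring hC) (regBdd_cseqColoring hreg hunc hC)
  have hAunb : ∀ x < κ.ord, ∃ a ∈ A, x < a := fun _ => exists_mem_gt_of_mk_eq hunc.le hAcard
  refine ⟨accPoints A κ.ord, isClubIn_accPoints hreg hunc hAκ hAunb, fun α hα => ?_⟩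
  have hκlim : IsSuccLimit κ.ord := isSuccLimit_ord hunc.le
  obtain ⟨a, ha, -⟩ := hAunb 0 hκlim.bot_lt
  obtain ⟨a', ha', haa'⟩ := hAunb a (hAκ ha)
  obtain ⟨c, hc, hc_gt⟩ := hAunb (max a' α) (max_lt (hAκ ha') hα)
  have hclim := hA.isSuccLimit_of_lt ha ha' hc haa' ((le_max_left _ _).trans_lt hc_gt)
  refine ⟨c, hAκ hc, hclim, ?_⟩
  calc accPoints A κ.ord ∩ Iio α ⊆ accPoints A κ.ord ∩ Iio c :=
        inter_subset_inter_right _ (Iio_subset_Iio ((le_max_right _ _).trans hc_gt.le))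
    _ ⊆ C c := hA.accPoints_inter_Iio_subset hc hclim (hC c (hAκ hc) hclim)
end

section
/- Let κ be a regular uncountable cardinal. Suppose every C-sequence on κ is trivial stationarily often: for every sequence ⟨C_α : α ∈ lim(κ)⟩ of clubs C_α ⊆ α, there is a club D ⊆ κ such that for every α < κ there are stationarily many β < κ with D ∩ α ⊆ C_β. Then κ →^poly (κ)^2_{reg-bdd} holds: every normal regressively bounded coloring f : [κ]^2 → κ admits a rainbow subset of cardinality κ. -/
open Ordinal Set Cardinal

/-!
Let `lam` witness regressive boundedness, and let `F v i < v` bound the colour class `i` of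
`f (·, v)`. Every limit `v` carries a club `C v` of size at most `cof v` that jumps over these
classes: `u < u'` in `C v` forces `F v (f u v) < u'`, so `f (·, v)` is injective on `C v`.
Triviality of this C-sequence gives a club `D`. Fix `δ` with `|D ∩ δ| ≥ lam` and choose
recursively an increasing sequence `a ξ ∈ D` with `D ∩ max (sup_{η<ξ} a η) δ ⊆ C (a ξ)`. Then
`C (a ξ)` contains `D ∩ δ`, which forces `cof (a ξ) ≥ lam`, as well as every earlier `a η`; by
normality of `f`, the range of `a` is rainbow.
-/

lemma lt_iSup_Iio_add_one {ξ η : Ordinal.{0}} (a : Ordinal.{0} → Ordinal.{0}) (hη : η < ξ) :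
    a η < ⨆ η : Iio ξ, a η + 1 :=
  (lt_add_one (a η)).trans_le (Ordinal.le_iSup (fun η : Iio ξ => a η + 1) ⟨η, hη⟩)

lemma iSup_Iio_add_one_lt_of_card_lt_cof {ξ o : Ordinal.{0}} (hξ : ξ.card < o.cof)
    {a : Ordinal → Ordinal} (ha : ∀ η < ξ, a η < o) : ⨆ η : Iio ξ, a η + 1 < o := by
  refine Ordinal.lift_iSup_add_one_lt_of_lt_cof ?_ fun η : Iio ξ => ha η.1 η.2
  simpa [Cardinal.mk_Iio_ordinal, ← Ordinal.lift_cof, ← Ordinal.lift_card] using hξ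

lemma mk_image_Iio_ord_of_injOn {a : Ordinal → Ordinal} {c : Cardinal.{0}}
    (h : InjOn a (Iio c.ord)) : #(a '' Iio c.ord) = Cardinal.lift.{1} c := by
  rw [Cardinal.mk_image_eq_of_injOn _ _ h, Cardinal.mk_Iio_ordinal, Cardinal.card_ord]

lemma IsClubIn.mem_of_forall_exists {C : Set Ordinal} {o α : Ordinal} (hC : IsClubIn C o)
    (hα : α < o) (hα₀ : α ≠ 0) (happ : ∀ β < α, ∃ γ ∈ C, β < γ ∧ γ < α) : α ∈ C := by
  refine hC.2.2 α hα (Ordinal.isSuccLimit_iff.2 ⟨hα₀, Order.isSuccPrelimit_iff_succ_lt.2 ?_⟩) happ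
  intro β hβ
  obtain ⟨γ, -, hβγ, hγα⟩ := happ β hβ
  exact (Order.succ_le_of_lt hβγ).trans_lt hγα

lemma isClubIn_Ioi_inter_Iio {o α : Ordinal} (ho : Order.IsSuccLimit o) (hα : α < o) :
    IsClubIn (Ioi α ∩ Iio o) o := by
  refine ⟨inter_subset_right, fun x hx => ?_, fun x hx hxl happ => ⟨?_, hx⟩⟩
  · exact ⟨Order.succ (max α x), ⟨(le_max_left α x).trans_lt (Order.lt_succ _),
      ho.succ_lt (max_lt hα hx)⟩, (le_max_right α x).trans_lt (Order.lt_succ _)⟩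
  · obtain ⟨γ, ⟨hαγ, -⟩, -, hγx⟩ := happ 0 hxl.bot_lt
    exact hαγ.trans hγx

lemma IsClubIn.iSup_mem {C : Set Ordinal.{0}} {o : Ordinal.{0}} (hC : IsClubIn C o)
    (hcof : ℵ₀ < o.cof) {y : ℕ → Ordinal.{0}} (hyo : ∀ n, y n < o)
    (hy : ∀ n, ∃ γ ∈ C, y n < γ ∧ γ ≤ y (n + 1)) : ⨆ n, y n ∈ C := by
  have hlt : ∀ n, y n < ⨆ n, y n := fun n => by
    obtain ⟨γ, -, h₁, h₂⟩ := hy n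
    exact (h₁.trans_le h₂).trans_le (Ordinal.le_iSup y _)
  refine hC.mem_of_forall_exists (Ordinal.iSup_lt_of_lt_cof (by simpa using hcof) hyo)
    (hlt 0).ne_bot fun β hβ => ?_
  obtain ⟨n, hn⟩ := Ordinal.lt_iSup_iff.1 hβ
  obtain ⟨γ, hγC, h₁, h₂⟩ := hy n
  exact ⟨γ, hγC, hn.trans h₁, h₂.trans_lt (hlt _)⟩

lemma IsClubIn.inter {C₁ C₂ : Set Ordinal.{0}} {o : Ordinal.{0}} (hcof : ℵ₀ < o.cof)
    (h₁ : IsClubIn C₁ o) (h₂ : IsClubIn C₂ o) : IsClubIn (C₁ ∩ C₂) o := by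
  refine ⟨inter_subset_left.trans h₁.1, fun x hx => ?_, fun α hα hlim happ =>
    ⟨h₁.2.2 α hα hlim fun β hβ => ?_, h₂.2.2 α hα hlim fun β hβ => ?_⟩⟩
  · choose! g₁ hg₁C hg₁ using h₁.2.1
    choose! g₂ hg₂C hg₂ using h₂.2.1
    let y : ℕ → Ordinal := fun n => Nat.rec x (fun _ z => max (g₁ z) (g₂ z)) n
    have hyo : ∀ n, y n < o := fun n => by
      induction n with
      | zero => exact hx
      | succ n ih => exact max_lt (h₁.1 (hg₁C _ ih)) (h₂.1 (hg₂C _ ih))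
    refine ⟨⨆ n, y n, ⟨h₁.iSup_mem hcof hyo fun n => ?_, h₂.iSup_mem hcof hyo fun n => ?_⟩,
      (hg₁ x hx).trans_le ((le_max_left _ _).trans (Ordinal.le_iSup y 1))⟩
    · exact ⟨g₁ (y n), hg₁C _ (hyo n), hg₁ _ (hyo n), le_max_left _ _⟩
    · exact ⟨g₂ (y n), hg₂C _ (hyo n), hg₂ _ (hyo n), le_max_right _ _⟩
  · obtain ⟨γ, hγ, h⟩ := happ β hβ
    exact ⟨γ, hγ.1, h⟩
  · obtain ⟨γ, hγ, h⟩ := happ β hβ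
    exact ⟨γ, hγ.2, h⟩

lemma IsStatIn.exists_mem_inter_gt {S D : Set Ordinal.{0}} {o α : Ordinal.{0}}
    (hS : IsStatIn S o) (hD : IsClubIn D o) (hcof : ℵ₀ < o.cof) (hα : α < o) :
    ∃ β ∈ S ∩ D, α < β := by
  have ho : Order.IsSuccLimit o := Ordinal.one_lt_cof_iff.1 (one_lt_aleph0.trans hcof)
  obtain ⟨β, hβS, hβD, hαβ, -⟩ := hS _ (hD.inter hcof (isClubIn_Ioi_inter_Iio ho hα))
  exact ⟨β, ⟨hβS, hβD⟩, hαβ⟩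

noncomputable def jumpSeq (g j : Ordinal.{0} → Ordinal.{0}) (ν : Ordinal.{0}) : Ordinal.{0} :=
  Ordinal.limitRecOn ν 0 (fun ν c => Order.succ (max (g ν) (max c (j c))))
    (fun ν _ c => ⨆ x : Iio ν, c x.1 x.2)

section jumpSeq

variable (g j : Ordinal.{0} → Ordinal.{0})

@[simp]
lemma jumpSeq_zero : jumpSeq g j 0 = 0 :=
  Ordinal.limitRecOn_zero ..

lemma jumpSeq_add_one (ν : Ordinal) :
    jumpSeq g j (ν + 1) = Order.succ (max (g ν) (max (jumpSeq g j ν) (j (jumpSeq g j ν)))) :=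
  Ordinal.limitRecOn_add_one ..

lemma jumpSeq_of_isSuccLimit {ν : Ordinal} (hν : Order.IsSuccLimit ν) :
    jumpSeq g j ν = ⨆ x : Iio ν, jumpSeq g j x :=
  Ordinal.limitRecOn_limit _ _ _ _ hν

lemma lt_jumpSeq_add_one (ν : Ordinal) :
    g ν < jumpSeq g j (ν + 1) ∧ j (jumpSeq g j ν) < jumpSeq g j (ν + 1) := by
  rw [jumpSeq_add_one]
  exact ⟨Order.lt_succ_of_le (le_max_left _ _),
    Order.lt_succ_of_le ((le_max_right _ _).trans (le_max_right _ _))⟩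

lemma isNormal_jumpSeq : Order.IsNormal (jumpSeq g j) := by
  refine .of_succ_lt (fun ν => ?_) fun {ν} hν => ?_
  · rw [Order.succ_eq_add_one, jumpSeq_add_one]
    exact Order.lt_succ_of_le ((le_max_left _ _).trans (le_max_right _ _))
  · have : Nonempty (Iio ν) := ⟨⟨0, hν.bot_lt⟩⟩
    rw [jumpSeq_of_isSuccLimit g j hν, image_eq_range]
    exact isLUB_ciSup Ordinal.bddAbove_of_small

end jumpSeq

lemma exists_isClubIn_jump {β : Ordinal.{0}} (hβ : Order.IsSuccLimit β) (j : Ordinal → Ordinal)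
    (hj : ∀ x < β, j x < β) :
    ∃ C : Set Ordinal, IsClubIn C β ∧ #C ≤ Cardinal.lift.{1} β.cof ∧
      ∀ a ∈ C, ∀ a' ∈ C, a < a' → j a < a' := by
  set μ := β.cof.ord
  obtain ⟨g, hg⟩ := Ordinal.exists_isFundamentalSeq (o := β) (a := μ) rfl
  have hμ : Order.IsSuccLimit μ :=
    Cardinal.isSuccLimit_ord (Ordinal.aleph0_le_cof_iff.2 (Ordinal.one_lt_cof_iff.2 hβ))
  let g' : Ordinal → Ordinal := fun ν => if h : ν < μ then g ⟨ν, h⟩ else 0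
  set c := jumpSeq g' j with hc_def
  have hc : Order.IsNormal c := isNormal_jumpSeq g' j
  have hcβ : ∀ ν < μ, c ν < β := by
    intro ν
    induction ν using Ordinal.limitRecOn with
    | zero => exact fun _ => by simpa [c] using hβ.bot_lt
    | add_one ν ih =>
      intro hν
      have hcν := ih ((Order.lt_succ ν).trans hν)
      rw [hc_def, jumpSeq_add_one]
      refine hβ.succ_lt (max_lt ?_ (max_lt hcν (hj _ hcν)))
      simp only [g', dif_pos ((Order.lt_succ ν).trans hν)]
      exact (g _).2
    | limit ν hν ih =>
      intro hνμ
      rw [hc_def, jumpSeq_of_isSuccLimit g' j hν]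
      exact (Ordinal.iSup_le_iSup_add_one _).trans_lt <| iSup_Iio_add_one_lt_of_card_lt_cof
        (Cardinal.lt_ord.1 hνμ) fun x hx => ih x hx (hx.trans hνμ)
  have hcofinal : ∀ x < β, ∃ ν < μ, x < c ν := by
    intro x hx
    obtain ⟨-, ⟨i, rfl⟩, hxi⟩ := hg.isCofinal_range ⟨x, hx⟩
    refine ⟨i.1 + 1, hμ.add_one_lt i.2, (Subtype.mk_le_mk.1 hxi).trans_lt ?_⟩
    have := (lt_jumpSeq_add_one g' j i.1).1
    simp only [g', dif_pos (show i.1 < μ from i.2)] at this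
    exact this
  refine ⟨c '' Iio μ, ⟨?_, ?_, ?_⟩, ?_, ?_⟩
  · rintro _ ⟨ν, hν, rfl⟩
    exact hcβ ν hν
  · intro x hx
    obtain ⟨ν, hν, hxν⟩ := hcofinal x hx
    exact ⟨c ν, mem_image_of_mem c hν, hxν⟩
  · intro α hα hαlim happ
    have hlub : IsLUB (c '' Iio μ ∩ Iio α) α := by
      refine ⟨fun γ hγ => hγ.2.le, fun b hb => not_lt.1 fun hbα => ?_⟩
      obtain ⟨γ, hγC, hbγ, hγα⟩ := happ b hbα
      exact (hb ⟨hγC, hγα⟩).not_gt hbγ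
    obtain ⟨γ, hγC, -, hγα⟩ := happ 0 hαlim.bot_lt
    obtain ⟨ν, rfl⟩ := hc.isClub_range.isLUB_mem (t := c '' Iio μ ∩ Iio α)
      (fun _ h => image_subset_range c _ h.1) ⟨γ, hγC, hγα⟩ hlub
    obtain ⟨ν₀, hν₀, hαν₀⟩ := hcofinal (c ν) hα
    exact mem_image_of_mem c ((hc.strictMono.lt_iff_lt.1 hαν₀).trans hν₀)
  · calc #(c '' Iio μ) ≤ #(Iio μ) := Cardinal.mk_image_le
      _ = Cardinal.lift.{1} β.cof := by rw [Cardinal.mk_Iio_ordinal, Cardinal.card_ord]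
  · rintro _ ⟨ν, -, rfl⟩ _ ⟨ν', -, rfl⟩ hνν'
    calc j (c ν) < c (ν + 1) := (lt_jumpSeq_add_one g' j ν).2
      _ ≤ c ν' := hc.monotone (Order.add_one_le_of_lt (hc.strictMono.lt_iff_lt.1 hνν'))

lemma exists_strictMonoOn_of_forall_exists {κ : Cardinal.{0}} (hκ : κ.IsRegular)
    (P : Ordinal → Ordinal → Prop) (H : ∀ s < κ.ord, ∃ β, s ≤ β ∧ β < κ.ord ∧ P s β) :
    ∃ a : Ordinal → Ordinal, StrictMonoOn a (Iio κ.ord) ∧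
      ∀ ξ < κ.ord, a ξ < κ.ord ∧ ∃ s, (∀ η < ξ, a η < s) ∧ P s (a ξ) := by
  choose! next hle hlt hP using H
  let a : Ordinal → Ordinal := Ordinal.lt_wf.fix fun ξ a => next (⨆ η : Iio ξ, a η.1 η.2 + 1)
  let s : Ordinal → Ordinal := fun ξ => ⨆ η : Iio ξ, a η + 1
  have ha : ∀ ξ, a ξ = next (s ξ) := fun ξ => Ordinal.lt_wf.fix_eq _ ξ
  have hs : ∀ ξ, ∀ η < ξ, a η < s ξ := fun _ _ => lt_iSup_Iio_add_one a
  have hsκ : ∀ ξ < κ.ord, s ξ < κ.ord := by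
    intro ξ
    induction ξ using WellFoundedLT.induction with
    | _ ξ ih =>
      intro hξ
      refine iSup_Iio_add_one_lt_of_card_lt_cof (by rwa [hκ.cof_ord, ← Cardinal.lt_ord])
        fun η hη => ?_
      rw [ha]
      exact hlt _ (ih η hη (hη.trans hξ))
  refine ⟨a, fun η hη ξ hξ h => ?_, fun ξ hξ => ?_⟩
  · exact (hs ξ η h).trans_le (ha ξ ▸ hle _ (hsκ ξ hξ))
  · exact ⟨ha ξ ▸ hlt _ (hsκ ξ hξ), s ξ, hs ξ, ha ξ ▸ hP _ (hsκ ξ hξ)⟩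

lemma exists_lift_le_mk_inter_Iio {κ lam : Cardinal.{0}} (hκ : κ.IsRegular) {D : Set Ordinal}
    (hD : IsClubIn D κ.ord) (hlam : lam < κ) :
    ∃ δ < κ.ord, Cardinal.lift.{1} lam ≤ #(D ∩ Iio δ : Set Ordinal) := by
  obtain ⟨e, he_mono, he⟩ := exists_strictMonoOn_of_forall_exists hκ (fun _ β => β ∈ D)
    fun s hs => by
      obtain ⟨β, hβD, hsβ⟩ := hD.2.1 s hs
      exact ⟨β, hsβ.le, hD.1 hβD, hβD⟩
  have hlam' : Iio lam.ord ⊆ Iio κ.ord := Iio_subset_Iio (Cardinal.ord_le_ord.2 hlam.le)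
  refine ⟨⨆ η : Iio lam.ord, e η + 1, iSup_Iio_add_one_lt_of_card_lt_cof
    (by rwa [hκ.cof_ord, Cardinal.card_ord]) fun η hη => (he η (hlam' hη)).1, ?_⟩
  rw [← mk_image_Iio_ord_of_injOn ((he_mono.mono hlam').injOn)]
  refine Cardinal.mk_le_mk_of_subset ?_
  rintro _ ⟨η, hη, rfl⟩
  obtain ⟨-, -, -, heD⟩ := he η (hlam' hη)
  exact ⟨heD, lt_iSup_Iio_add_one e hη⟩

lemma IsNormal2.rainbowOn_of_forall_ne {f : Ordinal → Ordinal → Ordinal} {o : Ordinal}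
    {A : Set Ordinal} (hnorm : IsNormal2 f o) (hA : A ⊆ Iio o)
    (h : ∀ u ∈ A, ∀ u' ∈ A, ∀ v ∈ A, u < u' → u' < v → f u v ≠ f u' v) : RainbowOn f A := by
  intro a ha b hb a' ha' b' hb' hab ha'b' heq
  obtain rfl : b = b' := hnorm a b a' b' hab (hA hb) ha'b' (hA hb') heq
  refine ⟨?_, rfl⟩
  rcases lt_trichotomy a a' with h' | h' | h'
  · exact absurd heq (h a ha a' ha' b hb h' ha'b')
  · exact h'
  · exact absurd heq.symm (h a' ha' a ha b hb h' hab)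

lemma IsNormal2.rainbowOn_of_jump {f : Ordinal → Ordinal → Ordinal} {o : Ordinal}
    {A : Set Ordinal} {C : Ordinal → Set Ordinal} {F : Ordinal → Ordinal → Ordinal}
    (hnorm : IsNormal2 f o) (hA : A ⊆ Iio o) (hAC : ∀ v ∈ A, A ∩ Iio v ⊆ C v)
    (hF : ∀ v ∈ A, ∀ β < v, β < F v (f β v))
    (hjump : ∀ v ∈ A, ∀ u ∈ C v, ∀ u' ∈ C v, u < u' → F v (f u v) < u') : RainbowOn f A :=
  hnorm.rainbowOn_of_forall_ne hA fun u hu u' hu' v hv huu' hu'v heq =>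
    (hF v hv u' hu'v).not_gt <| heq ▸
      hjump v hv u (hAC v hv ⟨hu, huu'.trans hu'v⟩) u' (hAC v hv ⟨hu', hu'v⟩) huu'

lemma exists_isClubIn_family_jump (p : Ordinal.{0} → Prop) (j : Ordinal → Ordinal → Ordinal)
    (hj : ∀ v, p v → ∀ x < v, j v x < v) :
    ∃ C : Ordinal → Set Ordinal, ∀ v, Order.IsSuccLimit v →
      IsClubIn (C v) v ∧ #(C v) ≤ Cardinal.lift.{1} v.cof ∧
        (p v → ∀ u ∈ C v, ∀ u' ∈ C v, u < u' → j v u < u') := by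
  have : ∀ v, Order.IsSuccLimit v → ∃ Cv : Set Ordinal, IsClubIn Cv v ∧
      #Cv ≤ Cardinal.lift.{1} v.cof ∧ (p v → ∀ u ∈ Cv, ∀ u' ∈ Cv, u < u' → j v u < u') := by
    intro v hv
    by_cases hp : p v
    · obtain ⟨Cv, h₁, h₂, h₃⟩ := exists_isClubIn_jump hv (j v) (hj v hp)
      exact ⟨Cv, h₁, h₂, fun _ => h₃⟩
    · obtain ⟨Cv, h₁, h₂, -⟩ := exists_isClubIn_jump hv id fun _ h => h
      exact ⟨Cv, h₁, h₂, (absurd · hp)⟩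
  choose! C hC using this
  exact ⟨C, hC⟩

lemma exists_strictMonoOn_subset_of_isStatIn {κ : Cardinal.{0}} (hκ : κ.IsRegular)
    (hunc : ℵ₀ < κ) {C : Ordinal → Set Ordinal} {D : Set Ordinal} (hD : IsClubIn D κ.ord)
    (hDC : ∀ α < κ.ord,
      IsStatIn {β | β < κ.ord ∧ Order.IsSuccLimit β ∧ D ∩ Iio α ⊆ C β} κ.ord)
    {δ : Ordinal} (hδ : δ < κ.ord) :
    ∃ a : Ordinal → Ordinal, StrictMonoOn a (Iio κ.ord) ∧ ∀ ξ < κ.ord, a ξ < κ.ord ∧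
      Order.IsSuccLimit (a ξ) ∧ a '' Iio ξ ∪ D ∩ Iio δ ⊆ C (a ξ) := by
  have hcof : ℵ₀ < κ.ord.cof := by rwa [hκ.cof_ord]
  obtain ⟨a, hmono, ha⟩ := exists_strictMonoOn_of_forall_exists hκ
    (fun s β => β ∈ D ∧ Order.IsSuccLimit β ∧ D ∩ Iio (max s δ) ⊆ C β) fun s hs => by
      obtain ⟨β, ⟨⟨hβκ, hβlim, hβC⟩, hβD⟩, hβ⟩ :=
        (hDC _ (max_lt hs hδ)).exists_mem_inter_gt hD hcof (max_lt hs hδ)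
      exact ⟨β, (le_max_left _ _).trans hβ.le, hβκ, hβD, hβlim, hβC⟩
  refine ⟨a, hmono, fun ξ hξ => ?_⟩
  obtain ⟨haκ, s, hs, -, hlim, hsub⟩ := ha ξ hξ
  refine ⟨haκ, hlim, union_subset ?_ ?_⟩
  · rintro _ ⟨η, hη, rfl⟩
    obtain ⟨-, -, -, haD, -⟩ := ha η (hη.trans hξ)
    exact hsub ⟨haD, (hs η hη).trans_le (le_max_left _ _)⟩
  · exact fun x hx => hsub ⟨hx.1, mem_Iio.2 (hx.2.trans_le (le_max_right _ _))⟩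

/-- If every C-sequence on the regular uncountable cardinal `κ` is trivial
stationarily often, then `κ →^poly (κ)²_{reg-bdd}` holds: every normal
regressively bounded coloring admits a rainbow subset of cardinality `κ`. -/
theorem stat_trivial_Csequence_implies_poly_regbdd (κ : Cardinal.{0})
    (hreg : κ.IsRegular) (hunc : ℵ₀ < κ)
    (htriv : ∀ C : Ordinal → Set Ordinal,
      (∀ α < κ.ord, Order.IsSuccLimit α → IsClubIn (C α) α) →
      ∃ D : Set Ordinal, IsClubIn D κ.ord ∧
        ∀ α < κ.ord,
          IsStatIn {β : Ordinal | β < κ.ord ∧ Order.IsSuccLimit β ∧ D ∩ Set.Iio α ⊆ C β} κ.ord)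
    (f : Ordinal → Ordinal → Ordinal) (hnorm : IsNormal2 f κ.ord)
    (hbdd : RegBdd f κ) :
    ∃ A : Set Ordinal, A ⊆ Set.Iio κ.ord ∧ #A = Cardinal.lift.{1} κ ∧
      RainbowOn f A := by
  obtain ⟨lam, hlamκ, -, hbound⟩ := hbdd
  choose! F hFlt hF using hbound
  obtain ⟨C, hC⟩ := exists_isClubIn_family_jump (fun v => v < κ.ord ∧ lam ≤ v.cof)
    (fun v x => F v (f x v)) fun v hv _ _ => hFlt v hv.1 hv.2 _
  obtain ⟨D, hD, hDC⟩ := htriv C fun v _ hv => (hC v hv).1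
  obtain ⟨δ, hδ, hlamδ⟩ := exists_lift_le_mk_inter_Iio hreg hD hlamκ
  obtain ⟨a, hmono, ha⟩ := exists_strictMonoOn_subset_of_isStatIn hreg hunc hD hDC hδ
  have hcof : ∀ ξ < κ.ord, lam ≤ (a ξ).cof := fun ξ hξ => by
    obtain ⟨-, hlim, hsub⟩ := ha ξ hξ
    exact Cardinal.lift_le.1 <| hlamδ.trans <|
      (Cardinal.mk_le_mk_of_subset (subset_union_right.trans hsub)).trans (hC _ hlim).2.1
  have hA : a '' Iio κ.ord ⊆ Iio κ.ord := by
    rintro _ ⟨ξ, hξ, rfl⟩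
    exact (ha ξ hξ).1
  refine ⟨_, hA, mk_image_Iio_ord_of_injOn hmono.injOn,
    hnorm.rainbowOn_of_jump (C := C) (F := F) hA ?_ ?_ ?_⟩
  · rintro _ ⟨ξ, hξ, rfl⟩ _ ⟨⟨η, hη, rfl⟩, hηξ⟩
    exact (ha ξ hξ).2.2 (Or.inl ⟨η, (hmono.lt_iff_lt hη hξ).1 hηξ, rfl⟩)
  · rintro _ ⟨ξ, hξ, rfl⟩ β hβ
    exact hF _ (ha ξ hξ).1 (hcof ξ hξ) _ β hβ rfl
  · rintro _ ⟨ξ, hξ, rfl⟩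
    exact (hC _ (ha ξ hξ).2.1).2.2 ⟨(ha ξ hξ).1, hcof ξ hξ⟩
end

section
/- Let κ be a cardinal and λ a cardinal with λ⁺ < κ and κ regular. Given a λ-bounded coloring f : [κ]^2 → κ and a set S ⊆ κ with |S| < κ such that f restricted to [S]^2 is normal, there exists γ < κ with γ > sup S such that f restricted to [S ∪ {γ}]^2 is normal. (Normalization step: any λ-bounded coloring on [κ]^2 admits a set B of size κ on which it is normal.) -/
open Ordinal Set Cardinal

/-!
A new point `γ` can only break normality by giving a pair `{a, γ}` with `a ∈ S` the colour of
some pair from `[S]^2`. There are at most `|S|^2` such colours, each colour class has size at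
most `λ`, so fewer than `κ` points `b < κ` are excluded this way. By regularity of `κ`, the
excluded points together with `S` are bounded below `κ`, and any `γ < κ` above them works.
-/

universe u v

section Coloring

variable {α : Type u} {β : Type v}

def IsNormalOn [LT α] (f : α → α → β) (S : Set α) : Prop :=
  ∀ a ∈ S, ∀ b ∈ S, ∀ a' ∈ S, ∀ b' ∈ S, a < b → a' < b' → f a b = f a' b' → b = b'

def collisionSet [LT α] (f : α → α → β) (S : Set α) : Set α :=
  {b | ∃ a ∈ S, a < b ∧ ∃ a' ∈ S, ∃ b' ∈ S, a' < b' ∧ f a b = f a' b'}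

theorem IsNormalOn.union_singleton [LinearOrder α] {f : α → α → β} {S : Set α} {γ : α}
    (hS : IsNormalOn f S) (hSγ : ∀ s ∈ S, s < γ) (hγ : γ ∉ collisionSet f S) :
    IsNormalOn f (S ∪ {γ}) := by
  have mem_of_lt : ∀ a ∈ S ∪ {γ}, ∀ b ∈ S ∪ {γ}, a < b → a ∈ S := by
    rintro a (ha | rfl) b (hb | rfl) hab
    · exact ha
    · exact ha
    · exact absurd (hab.trans (hSγ _ hb)) (lt_irrefl _)
    · exact absurd hab (lt_irrefl _)
  intro a ha b hb a' ha' b' hb' hab ha'b' heq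
  have haS := mem_of_lt a ha b hb hab
  have ha'S := mem_of_lt a' ha' b' hb' ha'b'
  rcases hb with hbS | rfl <;> rcases hb' with hb'S | rfl
  · exact hS a haS b hbS a' ha'S b' hb'S hab ha'b' heq
  · exact absurd ⟨a', ha'S, ha'b', a, haS, b, hbS, hab, heq.symm⟩ hγ
  · exact absurd ⟨a, haS, hab, a', ha'S, b', hb'S, ha'b', heq⟩ hγ
  · rfl

theorem mk_collisionSet_inter_Iio_le [Preorder α] (f : α → α → β) (S : Set α) (o : α) {μ : Cardinal.{u}}
    (hbdd : ∀ ξ : β, #{p : α × α // p.1 < p.2 ∧ p.2 < o ∧ f p.1 p.2 = ξ} ≤ μ) :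
    #↥(collisionSet f S ∩ Iio o) ≤ #(S × S × S) * μ := by
  let above : S × S × S → Set α := fun p =>
    {b | p.1 < b ∧ b < o ∧ f p.1 b = f p.2.1 p.2.2}
  have hsub : collisionSet f S ∩ Iio o ⊆ ⋃ p, above p := by
    rintro b ⟨⟨a, ha, hab, a', ha', b', hb', -, heq⟩, hbo⟩
    exact mem_iUnion.2 ⟨⟨⟨a, ha⟩, ⟨a', ha'⟩, ⟨b', hb'⟩⟩, hab, hbo, heq⟩
  have habove : ∀ p, #(above p) ≤ μ := fun p =>
    (mk_le_of_injective (f := fun b : above p =>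
      (⟨(p.1, b), b.2⟩ : {q : α × α // q.1 < q.2 ∧ q.2 < o ∧ f q.1 q.2 = f p.2.1 p.2.2}))
      fun b c h => Subtype.ext (congrArg (fun q => q.1.2) h)).trans (hbdd _)
  calc #↥(collisionSet f S ∩ Iio o) ≤ #(⋃ p, above p) := mk_le_mk_of_subset hsub
    _ ≤ #(S × S × S) * ⨆ p, #(above p) := mk_iUnion_le above
    _ ≤ #(S × S × S) * μ := mul_le_mul_right (ciSup_le' habove) _

end Coloring

theorem Cardinal.IsRegular.exists_lt_ord_forall_lt {κ : Cardinal.{u}} (hκ : κ.IsRegular)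
    {T : Set Ordinal.{u}} (hT : #T < Cardinal.lift.{u + 1} κ) (hTκ : T ⊆ Iio κ.ord) :
    ∃ γ < κ.ord, ∀ t ∈ T, t < γ := by
  have hcof : #T < (Ordinal.lift.{u + 1} κ.ord).cof := by
    rwa [← lift_cof, hκ.cof_ord]
  have hbdd : BddAbove ((· + 1) '' T) := by
    refine ⟨κ.ord, ?_⟩
    rintro _ ⟨t, ht, rfl⟩
    exact Order.add_one_le_of_lt (hTκ ht)
  exact ⟨_, sSup_add_one_lt_of_lt_cof hcof hTκ, fun t ht =>
    (Order.lt_add_one_iff.2 le_rfl).trans_le (le_csSup hbdd (mem_image_of_mem _ ht))⟩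

theorem normalization_step_general (κ lam : Cardinal.{0})
    (hreg : κ.IsRegular) (hlam : Order.succ lam < κ)
    (f : Ordinal → Ordinal → Ordinal)
    (hbdd : ∀ ξ : Ordinal,
      (#{p : Ordinal × Ordinal // p.1 < p.2 ∧ p.2 < κ.ord ∧ f p.1 p.2 = ξ}) ≤
        Cardinal.lift.{1} lam)
    (S : Set Ordinal) (hSsub : S ⊆ Set.Iio κ.ord) (hSsize : #S < Cardinal.lift.{1} κ)
    (hSnorm : ∀ a ∈ S, ∀ b ∈ S, ∀ a' ∈ S, ∀ b' ∈ S,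
      a < b → a' < b' → f a b = f a' b' → b = b') :
    ∃ γ, γ < κ.ord ∧ (∀ s ∈ S, s < γ) ∧
      (∀ a ∈ S ∪ {γ}, ∀ b ∈ S ∪ {γ}, ∀ a' ∈ S ∪ {γ}, ∀ b' ∈ S ∪ {γ},
        a < b → a' < b' → f a b = f a' b' → b = b') := by
  have hκ : ℵ₀ ≤ Cardinal.lift.{1} κ := by simpa using hreg.aleph0_le
  have hlam' : Cardinal.lift.{1} lam < Cardinal.lift.{1} κ :=
    lift_lt.2 ((Order.lt_succ lam).trans hlam)
  set B := collisionSet f S ∩ Iio κ.ord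
  have hB : #B < Cardinal.lift.{1} κ := by
    refine (mk_collisionSet_inter_Iio_le f S κ.ord hbdd).trans_lt (mul_lt_of_lt hκ ?_ hlam')
    simpa only [mk_prod, Cardinal.lift_id] using mul_lt_of_lt hκ hSsize (mul_lt_of_lt hκ hSsize hSsize)
  obtain ⟨γ, hγκ, hγ⟩ := hreg.exists_lt_ord_forall_lt
    ((mk_union_le S B).trans_lt (add_lt_of_lt hκ hSsize hB)) (union_subset hSsub inter_subset_right)
  have hγB : γ ∉ collisionSet f S := fun h => (hγ γ (Or.inr ⟨h, hγκ⟩)).false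
  exact ⟨γ, hγκ, fun s hs => hγ s (Or.inl hs),
    IsNormalOn.union_singleton hSnorm (fun s hs => hγ s (Or.inl hs)) hγB⟩

/-- Normalization step: given a `λ`-bounded coloring `f` of pairs from a regular
cardinal `κ` with `λ⁺ < κ`, any set `S` of size `< κ` on which `f` is normal can
be extended by one more element above `sup S` keeping `f` normal. -/
theorem normalization_step (κ lam : Cardinal.{0})
    (hκinf : ℵ₀ ≤ κ) (hreg : κ.IsRegular) (hlam : Order.succ lam < κ)
    (f : Ordinal → Ordinal → Ordinal)
    (hbdd : ∀ ξ : Ordinal,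
      (#{p : Ordinal × Ordinal // p.1 < p.2 ∧ p.2 < κ.ord ∧ f p.1 p.2 = ξ}) ≤
        Cardinal.lift.{1} lam)
    (S : Set Ordinal) (hSsub : S ⊆ Set.Iio κ.ord) (hSsize : #S < Cardinal.lift.{1} κ)
    (hSnorm : ∀ a ∈ S, ∀ b ∈ S, ∀ a' ∈ S, ∀ b' ∈ S,
      a < b → a' < b' → f a b = f a' b' → b = b') :
    ∃ γ, γ < κ.ord ∧ (∀ s ∈ S, s < γ) ∧
      (∀ a ∈ S ∪ {γ}, ∀ b ∈ S ∪ {γ}, ∀ a' ∈ S ∪ {γ}, ∀ b' ∈ S ∪ {γ},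
        a < b → a' < b' → f a b = f a' b' → b = b') :=
  normalization_step_general κ lam hreg hlam f hbdd S hSsub hSsize hSnorm
end

section
/- Let κ be a singular cardinal with cf(κ) = λ < κ. Suppose there exists a normal transitive coloring d : [κ⁺]^2 → λ that is approachable on E ∩ {δ < κ⁺ : cf(δ) = λ⁺} for some club E ⊆ κ⁺. Then κ⁺ does not satisfy κ⁺ →^poly (λ⁺)^2_{<κ-bdd}: the coloring f(α,β) = (d(α,β), β) is <κ-bounded and admits no rainbow subset of order type λ⁺ contained in E. -/
/-!
Let `h` enumerate a subset of `E` of order type `λ⁺` and let `δ` be its supremum. Then `δ ∈ E` has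
cofinality `λ⁺`, so `d` is approachable at `δ` through some cofinal `A ⊆ δ`. Pick `a_j ∈ A` above
`h j`. By pigeonhole, `λ` many `j` share one colour `c = d(h j, a j)`; since `λ < cf δ`, their
`a_j` lie below some `α ∈ A`, and some `h k` lies above `α`. Transitivity through `a_j` and `α`
bounds `d(h j, h k)` by `max(c, η, d(α, h k)) < λ`, where `η` bounds the colours from `A` into `α`,
so these `λ` many pairs receive fewer than `λ` colours and two of them agree.
-/

open Ordinal Set Cardinal

open Order

universe u

theorem mk_fiber_lt_of_normal {κ ν : Cardinal.{u}} (hν : ℵ₀ ≤ ν) {K : Ordinal.{u}}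
    {d : Ordinal → Ordinal → Ordinal}
    (hval : ∀ α β, α < β → β < K → d α β < ν.ord)
    (hnormal : ∀ i < ν.ord, ∃ μ : Cardinal.{u}, μ < κ ∧
      ∀ α < K, #{β : Ordinal // β < α ∧ d β α < i} ≤ Cardinal.lift.{u + 1} μ)
    (ξ : Ordinal) {β : Ordinal} (hβ : β < K) :
    #{α : Ordinal // α < β ∧ d α β = ξ} < Cardinal.lift.{u + 1} κ := by
  by_cases hξ : ξ < ν.ord
  · obtain ⟨μ, hμκ, hμ⟩ := hnormal (succ ξ) ((isSuccLimit_ord hν).succ_lt hξ)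
    calc #{α : Ordinal // α < β ∧ d α β = ξ}
        ≤ #{α : Ordinal // α < β ∧ d α β < succ ξ} :=
          mk_subtype_mono fun α ⟨hαβ, hα⟩ => ⟨hαβ, hα ▸ lt_succ ξ⟩
      _ ≤ Cardinal.lift μ := hμ β hβ
      _ < Cardinal.lift κ := lift_lt.2 hμκ
  · obtain ⟨μ, hμκ, -⟩ := hnormal 0 (ord_pos.2 (aleph0_pos.trans_le hν))
    have : IsEmpty {α : Ordinal // α < β ∧ d α β = ξ} :=
      ⟨fun ⟨α, hαβ, hα⟩ => hξ (hα ▸ hval α β hαβ hβ)⟩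
    rw [mk_eq_zero]
    exact zero_lt_lift_iff.2 (pos_of_gt hμκ)

section Supremum

variable {o : Ordinal.{u}} {h : Ordinal.{u} → Ordinal.{u}}

theorem lt_iSup_Iio_of_strictMonoOn (ho : IsSuccLimit o) (hh : StrictMonoOn h (Iio o))
    {j : Ordinal} (hj : j < o) : h j < ⨆ i : Iio o, h i :=
  (hh hj (ho.succ_lt hj) (lt_succ j)).trans_le
    (Ordinal.le_iSup (fun i : Iio o => h i) ⟨succ j, ho.succ_lt hj⟩)

theorem exists_lt_of_lt_iSup_Iio {x : Ordinal} (hx : x < ⨆ i : Iio o, h i) :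
    ∃ j < o, x < h j := by
  obtain ⟨⟨j, hj⟩, hxj⟩ := Ordinal.lt_iSup_iff.1 hx
  exact ⟨j, hj, hxj⟩

theorem cof_iSup_Iio_of_strictMonoOn (ho : IsSuccLimit o) (hh : StrictMonoOn h (Iio o)) :
    (⨆ i : Iio o, h i).cof = o.cof :=
  cof_iSup_Iio (fun i j hij => hh i.2 j.2 hij) ho.isSuccPrelimit

theorem iSup_Iio_lt_of_card_lt_cof {K : Ordinal.{u}} (hoK : o.card < K.cof)
    (hh : ∀ j < o, h j < K) : ⨆ i : Iio o, h i < K := by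
  refine lift_iSup_lt_of_lt_cof ?_ fun i => hh i i.2
  rwa [Cardinal.mk_Iio_ordinal, Cardinal.lift_lift, ← lift_cof, Cardinal.lift_lt]

theorem IsClubIn.iSup_Iio_mem {E : Set Ordinal} {K : Ordinal} (hE : IsClubIn E K)
    (ho : IsSuccLimit o) (hh : StrictMonoOn h (Iio o)) (hhE : ∀ j < o, h j ∈ E)
    (hK : ⨆ i : Iio o, h i < K) : ⨆ i : Iio o, h i ∈ E := by
  refine hE.2.2 _ hK ?_ fun β hβ => ?_
  · rw [← one_lt_cof_iff, cof_iSup_Iio_of_strictMonoOn ho hh, one_lt_cof_iff]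
    exact ho
  · obtain ⟨j, hj, hβj⟩ := exists_lt_of_lt_iSup_Iio hβ
    exact ⟨h j, hhE j hj, hβj, lt_iSup_Iio_of_strictMonoOn ho hh hj⟩

end Supremum

theorem exists_monochromatic_subset_of_lt_card {ν : Cardinal.{u}} (hν : ℵ₀ ≤ ν) {o : Ordinal.{u}}
    (ho : ν < o.card) {f : Ordinal.{u} → Ordinal.{u}} (hf : ∀ j < o, f j < ν.ord) :
    ∃ c < ν.ord, ∃ J ⊆ Iio o, #J = Cardinal.lift.{u + 1} ν ∧ ∀ j ∈ J, f j = c := by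
  have hθ : Cardinal.lift.{u + 1} (succ ν) ≤ #(Iio o) := by
    rw [Cardinal.mk_Iio_ordinal, Cardinal.lift_le]
    exact succ_le_of_lt ho
  have hθ₀ : ℵ₀ ≤ Cardinal.lift.{u + 1} (succ ν) := aleph0_le_lift.2 (hν.trans (le_succ ν))
  have hcolors : #(Iio ν.ord) < (Cardinal.lift.{u + 1} (succ ν)).ord.cof := by
    rw [Cardinal.mk_Iio_ordinal, card_ord, (isRegular_succ hν).lift.cof_ord, Cardinal.lift_lt]
    exact lt_succ ν
  obtain ⟨c, t, hto, hθt, htc⟩ :=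
    infinite_pigeonhole_set (fun j : Iio o => (⟨f j, hf j j.2⟩ : Iio ν.ord)) _ hθ hθ₀ hcolors
  obtain ⟨J, hJt, hJ⟩ :=
    le_mk_iff_exists_subset.1 ((Cardinal.lift_le.2 (le_succ ν)).trans hθt)
  exact ⟨c, c.2, J, hJt.trans hto, hJ, fun j hj => congrArg Subtype.val (htc (hJt hj))⟩

theorem not_injOn_of_forall_le {ν : Cardinal.{u}} (hν : ℵ₀ ≤ ν) {J : Set Ordinal.{u}}
    (hJ : #J = Cardinal.lift.{u + 1} ν) {g : Ordinal → Ordinal} {M : Ordinal} (hM : M < ν.ord)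
    (hg : ∀ j ∈ J, g j ≤ M) : ¬ InjOn g J := by
  intro hinj
  have hle : #J ≤ #(Iio (succ M)) := by
    rw [← mk_image_eq_of_injOn _ _ hinj]
    exact mk_le_mk_of_subset (image_subset_iff.2 fun j hj => lt_succ_iff.2 (hg j hj))
  rw [hJ, Cardinal.mk_Iio_ordinal, Cardinal.lift_le] at hle
  exact hle.not_gt (lt_ord.1 ((isSuccLimit_ord hν).succ_lt hM))

theorem le_max_max_of_transitive {K : Ordinal} {d : Ordinal → Ordinal → Ordinal}
    (htrans : ∀ α γ β, α < γ → γ < β → β < K → d α β ≤ max (d α γ) (d γ β))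
    {β γ α δ : Ordinal} (hβγ : β < γ) (hγα : γ < α) (hαδ : α < δ) (hδ : δ < K) :
    d β δ ≤ max (d β γ) (max (d γ α) (d α δ)) :=
  (htrans _ _ _ hβγ (hγα.trans hαδ) hδ).trans (max_le_max le_rfl (htrans _ _ _ hγα hαδ hδ))

theorem exists_eq_color_of_approachable {ν : Cardinal.{u}} (hν : ℵ₀ ≤ ν)
    {K δ o : Ordinal.{u}} {d : Ordinal → Ordinal → Ordinal}
    (hval : ∀ α β, α < β → β < K → d α β < ν.ord)
    (htrans : ∀ α γ β, α < γ → γ < β → β < K → d α β ≤ max (d α γ) (d γ β))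
    (hδK : δ < K) (hδ : ν < δ.cof) {A : Set Ordinal} (hAδ : A ⊆ Iio δ)
    (hA : ∀ x < δ, ∃ y ∈ A, x < y) (happr : ∀ α ∈ A, ∃ η < ν.ord, ∀ β ∈ A, β < α → d β α ≤ η)
    (ho : ν < o.card) {h : Ordinal → Ordinal} (hh : StrictMonoOn h (Iio o))
    (hhδ : ∀ j < o, h j < δ) (hcof : ∀ x < δ, ∃ j < o, x < h j) :
    ∃ i i' j, i < i' ∧ i' < j ∧ j < o ∧ d (h i) (h j) = d (h i') (h j) := by
  choose! a haA hha using fun j (hj : j < o) => hA (h j) (hhδ j hj)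
  obtain ⟨c, hc, J, hJo, hJ, hJc⟩ := exists_monochromatic_subset_of_lt_card hν ho
    (f := fun j => d (h j) (a j)) fun j hj => hval _ _ (hha j hj) ((hAδ (haA j hj)).trans hδK)
  have hσ : ⨆ j : J, a j < δ := by
    refine lift_iSup_lt_of_lt_cof ?_ fun j => hAδ (haA j (hJo j.2))
    rwa [hJ, Cardinal.lift_lift, ← lift_cof, Cardinal.lift_lt]
  obtain ⟨α, hαA, hσα⟩ := hA _ hσ
  obtain ⟨k, hk, hαk⟩ := hcof α (hAδ hαA)
  obtain ⟨η, hη, hηα⟩ := happr α hαA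
  have hkK : h k < K := (hhδ k hk).trans hδK
  have : Small.{u} J := small_subset hJo
  have haα : ∀ j ∈ J, a j < α := fun j hj =>
    (Ordinal.le_iSup (fun j : J => a j) ⟨j, hj⟩).trans_lt hσα
  have hbound : ∀ j ∈ J, d (h j) (h k) ≤ max c (max η (d α (h k))) := fun j hj =>
    (le_max_max_of_transitive htrans (hha j (hJo hj)) (haα j hj) hαk hkK).trans
      (max_le_max (hJc j hj).le (max_le_max (hηα _ (haA j (hJo hj)) (haα j hj)) le_rfl))
  have hJk : ∀ j ∈ J, j < k := fun j hj => (hh.lt_iff_lt (hJo hj) hk).1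
    ((hha j (hJo hj)).trans ((haα j hj).trans hαk))
  have hnotinj := not_injOn_of_forall_le hν hJ (max_lt hc (max_lt hη (hval _ _ hαk hkK))) hbound
  obtain ⟨i, hi, i', hi', heq, hne⟩ :
      ∃ i ∈ J, ∃ i' ∈ J, d (h i) (h k) = d (h i') (h k) ∧ i ≠ i' := by
    simpa [InjOn] using hnotinj
  rcases hne.lt_or_gt with hii' | hi'i
  · exact ⟨i, i', k, hii', hJk i' hi', hk, heq⟩
  · exact ⟨i', i, k, hi'i, hJk i hi, hk, heq.symm⟩

/-- If `κ` is singular with `cf(κ) = λ` and there is a normal transitive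
coloring `d : [κ⁺]² → λ` approachable on `E ∩ cof(λ⁺)` for a club `E ⊆ κ⁺`,
then `κ⁺ ↛^poly (λ⁺)²_{<κ-bdd}`: the induced coloring `f(α,β) = (d(α,β),β)` is
`<κ`-bounded and has no rainbow subset of order type `λ⁺` contained in `E`. -/
theorem approachable_implies_neg_poly (κ : Cardinal.{0}) (hκ : ℵ₀ ≤ κ)
    (hsing : (κ.ord).cof < κ)
    (d : Ordinal → Ordinal → Ordinal)
    (hval : ∀ α β, α < β → β < (Order.succ κ).ord → d α β < ((κ.ord).cof).ord)
    -- d is normal :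
    (hnormal : ∀ i < ((κ.ord).cof).ord, ∃ μ : Cardinal.{0}, μ < κ ∧
      ∀ α < (Order.succ κ).ord,
        (#{β : Ordinal // β < α ∧ d β α < i}) ≤ Cardinal.lift.{1} μ)
    -- d is transitive :
    (htrans : ∀ α γ β, α < γ → γ < β → β < (Order.succ κ).ord →
      d α β ≤ max (d α γ) (d γ β))
    (E : Set Ordinal) (hE : IsClubIn E (Order.succ κ).ord)
    -- d is approachable on E ∩ cof(λ⁺) :
    (happr : ∀ δ ∈ E, δ < (Order.succ κ).ord →
      δ.cof = Order.succ ((κ.ord).cof) →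
      ∃ A : Set Ordinal, A ⊆ Set.Iio δ ∧ (∀ x < δ, ∃ y ∈ A, x < y) ∧
        ∀ α ∈ A, ∃ η < ((κ.ord).cof).ord, ∀ β ∈ A, β < α → d β α ≤ η) :
    -- the coloring f(α,β) = (d(α,β), β) is <κ-bounded :
    (∀ ξ β, β < (Order.succ κ).ord →
      (#{α : Ordinal // α < β ∧ d α β = ξ}) < Cardinal.lift.{1} κ) ∧
    -- and f admits no rainbow subset of order type λ⁺ contained in E :
    (∀ h : Ordinal → Ordinal,
      StrictMonoOn h (Set.Iio (Order.succ ((κ.ord).cof)).ord) →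
      (∀ j < (Order.succ ((κ.ord).cof)).ord, h j < (Order.succ κ).ord ∧ h j ∈ E) →
      ∃ i i' j, i < i' ∧ i' < j ∧ j < (Order.succ ((κ.ord).cof)).ord ∧
        d (h i) (h j) = d (h i') (h j)) := by
  have hν : ℵ₀ ≤ (κ.ord).cof := (isRegular_cof (isSuccLimit_ord hκ)).aleph0_le
  refine ⟨fun ξ β hβ => mk_fiber_lt_of_normal hν hval hnormal ξ hβ, fun h hh hhE => ?_⟩
  have hΛ : IsSuccLimit (succ (κ.ord).cof).ord := isSuccLimit_ord (hν.trans (le_succ _))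
  set δ := ⨆ j : Iio (succ (κ.ord).cof).ord, h j
  have hδcof : δ.cof = succ (κ.ord).cof := by
    rw [cof_iSup_Iio_of_strictMonoOn hΛ hh, (isRegular_succ hν).cof_ord]
  have hδK : δ < (succ κ).ord := by
    refine iSup_Iio_lt_of_card_lt_cof ?_ fun j hj => (hhE j hj).1
    rw [card_ord, (isRegular_succ hκ).cof_ord]
    exact succ_lt_succ_iff.2 hsing
  obtain ⟨A, hAδ, hA, hAappr⟩ :=
    happr δ (hE.iSup_Iio_mem hΛ hh (fun j hj => (hhE j hj).2) hδK) hδK hδcof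
  exact exists_eq_color_of_approachable hν hval htrans hδK (hδcof ▸ lt_succ _) hAδ hA hAappr
    (by rw [card_ord]; exact lt_succ _) hh (fun j hj => lt_iSup_Iio_of_strictMonoOn hΛ hh hj)
    fun x hx => exists_lt_of_lt_iSup_Iio hx
end

section
/- Let d : [κ⁺]^2 → λ be transitive and let B ⊆ γ be a set of order type λ⁺ cofinal in γ with sup d''[B]^2 ≤ η₀ < λ. Let A ⊆ γ be cofinal of order type λ⁺. Then there exist A' ⊆ A of cardinality λ⁺ and η* < λ such that d(α, α') ≤ η* for all α < α' in A'. -/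
/-!
Interleave `A` with `B`: by regularity of `λ⁺` there are increasing index sequences `t`, `u` with
`a (t ξ) < b (u ξ) < a (t ξ')` for `ξ < ξ'`. Each successor term `x ξ = a (t (ξ + 1))` lies between
`b (u ξ)` and `b (u (ξ + 1))`, and by pigeonhole the distances from `x ξ` to these two points take
one value `v < λ` for `λ⁺` many `ξ`. For two such `ξ < ζ`, transitivity along
`x ξ < b (u (ξ + 1)) ≤ b (u ζ) < x ζ` bounds `d (x ξ) (x ζ)` by `max η₀ v`.
-/

open Ordinal Set Cardinal

theorem le_of_lt_of_le_of_lt_of_transitive {α β : Type*} [LinearOrder α] [LinearOrder β]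
    {d : α → α → β} {K : α}
    (htrans : ∀ x y z, x < y → y < z → z < K → d x z ≤ max (d x y) (d y z))
    {x y z w : α} {η : β} (hxy : x < y) (hyz : y ≤ z) (hzw : z < w) (hwK : w < K)
    (hdxy : d x y ≤ η) (hdyz : y < z → d y z ≤ η) (hdzw : d z w ≤ η) : d x w ≤ η := by
  rcases hyz.lt_or_eq with hyz | rfl
  · calc d x w ≤ max (d x y) (d y w) := htrans x y w hxy (hyz.trans hzw) hwK
      _ ≤ η := max_le hdxy ((htrans y z w hyz hzw hwK).trans (max_le (hdyz hyz) hdzw))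
  · exact (htrans x y w hxy hzw hwK).trans (max_le hdxy hdzw)

theorem Cardinal.IsRegular.exists_seq_map_le {μ : Cardinal.{u}} (hμ : μ.IsRegular)
    (F : Ordinal.{u} → Ordinal.{u}) (hF : ∀ i < μ.ord, F i < μ.ord) :
    ∃ t : Ordinal.{u} → Ordinal.{u}, MapsTo t (Iio μ.ord) (Iio μ.ord) ∧
      ∀ ξ' ξ, ξ' < ξ → ξ < μ.ord → F (t ξ') ≤ t ξ := by
  let t : Ordinal.{u} → Ordinal.{u} := WellFounded.fix wellFounded_lt
    fun ξ ih ↦ sSup (range fun ξ' : Iio ξ => F (ih ξ'.1 ξ'.2))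
  have ht (ξ) : t ξ = sSup (range fun ξ' : Iio ξ => F (t ξ')) := WellFounded.fix_eq _ _ _
  have htlt : ∀ ξ < μ.ord, t ξ < μ.ord := by
    intro ξ
    induction ξ using WellFoundedLT.induction with
    | _ ξ ih =>
      intro hξ
      rw [ht]
      refine sSup_lt_of_lt_cof (mk_range_le.trans_lt ?_) ?_
      · rw [mk_Iio_ordinal, ← lift_cof, hμ.cof_ord, lift_lt, ← lt_ord]
        exact hξ
      · rintro _ ⟨⟨ξ', hξ'⟩, rfl⟩
        exact hF _ (ih ξ' hξ' (hξ'.trans hξ))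
  refine ⟨t, fun ξ hξ ↦ htlt ξ hξ, fun ξ' ξ hξ'ξ hξ ↦ ?_⟩
  rw [ht ξ]
  refine le_csSup ⟨μ.ord, ?_⟩ ⟨⟨ξ', hξ'ξ⟩, rfl⟩
  rintro _ ⟨⟨ξ'', hξ''⟩, rfl⟩
  exact (hF _ (htlt ξ'' (hξ''.trans hξ))).le

theorem Cardinal.IsRegular.exists_interleaving {μ : Cardinal.{u}} (hμ : μ.IsRegular)
    {a b : Ordinal.{u} → Ordinal.{u}} (ha : StrictMonoOn a (Iio μ.ord))
    (hb : StrictMonoOn b (Iio μ.ord)) (hab : ∀ i < μ.ord, ∃ j < μ.ord, a i < b j)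
    (hba : ∀ j < μ.ord, ∃ i < μ.ord, b j < a i) :
    ∃ t u : Ordinal.{u} → Ordinal.{u},
      MapsTo t (Iio μ.ord) (Iio μ.ord) ∧ MapsTo u (Iio μ.ord) (Iio μ.ord) ∧
      StrictMonoOn t (Iio μ.ord) ∧ StrictMonoOn u (Iio μ.ord) ∧
      (∀ ξ < μ.ord, a (t ξ) < b (u ξ)) ∧ ∀ ξ' ξ, ξ' < ξ → ξ < μ.ord → b (u ξ') < a (t ξ) := by
  choose! up hupΛ hup using hab
  choose! next hnextΛ hnext using hba
  obtain ⟨t, htΛ, hnext_le⟩ :=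
    hμ.exists_seq_map_le (fun i ↦ next (up i)) fun i hi ↦ hnextΛ _ (hupΛ i hi)
  have hinter : ∀ ξ' ξ, ξ' < ξ → ξ < μ.ord → b (up (t ξ')) < a (t ξ) := by
    intro ξ' ξ hξ'ξ hξ
    have htξ' := htΛ (hξ'ξ.trans hξ)
    exact (hnext _ (hupΛ _ htξ')).trans_le <|
      ha.monotoneOn (hnextΛ _ (hupΛ _ htξ')) (htΛ hξ) (hnext_le ξ' ξ hξ'ξ hξ)
  refine ⟨t, up ∘ t, htΛ, fun ξ hξ ↦ hupΛ _ (htΛ hξ), fun ξ' hξ' ξ hξ hξ'ξ ↦ ?_,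
    fun ξ' hξ' ξ hξ hξ'ξ ↦ ?_, fun ξ hξ ↦ hup _ (htΛ hξ), hinter⟩
  · exact (ha.lt_iff_lt (htΛ hξ') (htΛ hξ)).1 <|
      (hup _ (htΛ hξ')).trans (hinter ξ' ξ hξ'ξ hξ)
  · exact (hb.lt_iff_lt (hupΛ _ (htΛ hξ')) (hupΛ _ (htΛ hξ))).1 <|
      (hinter ξ' ξ hξ'ξ hξ).trans (hup _ (htΛ hξ))

theorem Cardinal.IsRegular.exists_card_eq_forall_eq {μ ν : Cardinal.{u}} (hμ : μ.IsRegular)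
    (hνμ : ν < μ) (f : Ordinal.{u} → Ordinal.{u}) (hf : ∀ ξ < μ.ord, f ξ < ν.ord) :
    ∃ v < ν.ord, ∃ T ⊆ Iio μ.ord, #T = Cardinal.lift.{u + 1} μ ∧ ∀ ξ ∈ T, f ξ = v := by
  have hmk : #(Iio μ.ord) = Cardinal.lift.{u + 1} μ := by rw [mk_Iio_ordinal, card_ord]
  obtain ⟨v, T, hT, hTcard, hTv⟩ := infinite_pigeonhole_set
    (fun ξ : Iio μ.ord ↦ (⟨f ξ, hf ξ ξ.2⟩ : Iio ν.ord)) (Cardinal.lift.{u + 1} μ) hmk.ge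
    (aleph0_le_lift.2 hμ.aleph0_le)
    (by rw [hμ.lift.cof_ord, mk_Iio_ordinal, card_ord, lift_lt]; exact hνμ)
  exact ⟨v, v.2, T, hT, le_antisymm ((mk_le_mk_of_subset hT).trans hmk.le) hTcard,
    fun ξ hξ ↦ congrArg Subtype.val (hTv hξ)⟩

open Order in
theorem transitive_interleave_general (κ lam : Cardinal.{0})
    (hlamreg : lam.IsRegular)
    (γ : Ordinal) (hγ : γ < (Order.succ κ).ord)
    (d : Ordinal → Ordinal → Ordinal)
    (hval : ∀ α β, α < β → β < (Order.succ κ).ord → d α β < lam.ord)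
    (htrans : ∀ α γ' β, α < γ' → γ' < β → β < (Order.succ κ).ord →
      d α β ≤ max (d α γ') (d γ' β))
    -- B, enumerated by b, is cofinal in γ of order type λ⁺ with d ≤ η₀ on its pairs :
    (b : Ordinal → Ordinal) (hb : StrictMonoOn b (Set.Iio (Order.succ lam).ord))
    (hbγ : ∀ i < (Order.succ lam).ord, b i < γ)
    (hbcof : ∀ x < γ, ∃ i < (Order.succ lam).ord, x < b i)
    (η₀ : Ordinal) (hη₀ : η₀ < lam.ord)
    (hBbdd : ∀ i j, i < j → j < (Order.succ lam).ord → d (b i) (b j) ≤ η₀)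
    -- A, enumerated by a, is cofinal in γ of order type λ⁺ :
    (a : Ordinal → Ordinal) (ha : StrictMonoOn a (Set.Iio (Order.succ lam).ord))
    (haγ : ∀ i < (Order.succ lam).ord, a i < γ)
    (hacof : ∀ x < γ, ∃ i < (Order.succ lam).ord, x < a i) :
    ∃ I : Set Ordinal, I ⊆ Set.Iio (Order.succ lam).ord ∧
      #I = Cardinal.lift.{1} (Order.succ lam) ∧
      ∃ ηstar < lam.ord, ∀ i ∈ I, ∀ j ∈ I, i < j → d (a i) (a j) ≤ ηstar := by
  have hreg : (succ lam).IsRegular := isRegular_succ hlamreg.aleph0_le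
  have hsucc : ∀ ξ < (succ lam).ord, succ ξ < (succ lam).ord :=
    fun ξ ↦ (isSuccLimit_ord hreg.aleph0_le).succ_lt
  have haK : ∀ i < (succ lam).ord, a i < (succ κ).ord := fun i hi ↦ (haγ i hi).trans hγ
  have hbK : ∀ j < (succ lam).ord, b j < (succ κ).ord := fun j hj ↦ (hbγ j hj).trans hγ
  obtain ⟨t, u, htΛ, huΛ, ht, hu, hab, hba⟩ := hreg.exists_interleaving ha hb
    (fun i hi ↦ hbcof _ (haγ i hi)) (fun j hj ↦ hacof _ (hbγ j hj))
  obtain ⟨v, hv, T, hTΛ, hTcard, hTv⟩ := hreg.exists_card_eq_forall_eq (lt_succ lam)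
    (fun ξ ↦ max (d (b (u ξ)) (a (t (succ ξ)))) (d (a (t (succ ξ))) (b (u (succ ξ)))))
    fun ξ hξ ↦ max_lt (hval _ _ (hba _ _ (lt_succ ξ) (hsucc ξ hξ)) (haK _ (htΛ (hsucc ξ hξ))))
      (hval _ _ (hab _ (hsucc ξ hξ)) (hbK _ (huΛ (hsucc ξ hξ))))
  have hmono : StrictMonoOn (fun ξ ↦ t (succ ξ)) T :=
    ht.comp (succ_strictMono.strictMonoOn T) fun ξ hξ ↦ hsucc ξ (hTΛ hξ)
  refine ⟨(fun ξ ↦ t (succ ξ)) '' T, ?_, ?_, max η₀ v, max_lt hη₀ hv, ?_⟩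
  · rintro _ ⟨ξ, hξ, rfl⟩
    exact htΛ (hsucc ξ (hTΛ hξ))
  · rw [mk_image_eq_of_injOn _ _ hmono.injOn, hTcard]
  · rintro _ ⟨ξ, hξ, rfl⟩ _ ⟨ζ, hζ, rfl⟩ hlt
    have hξζ : ξ < ζ := (hmono.lt_iff_lt hξ hζ).1 hlt
    have hζΛ := hTΛ hζ
    have hξ' := hsucc ξ (hTΛ hξ)
    have hζ' := hsucc ζ hζΛ
    have huξζ : u (succ ξ) ≤ u ζ := hu.monotoneOn hξ' hζΛ (succ_le_of_lt hξζ)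
    exact le_of_lt_of_le_of_lt_of_transitive htrans (hab _ hξ')
      (hb.monotoneOn (huΛ hξ') (huΛ hζΛ) huξζ) (hba _ _ (lt_succ ζ) hζ') (haK _ (htΛ hζ'))
      (le_max_of_le_right ((le_max_right _ _).trans_eq (hTv ξ hξ)))
      (fun h ↦ le_max_of_le_left (hBbdd _ _ ((hb.lt_iff_lt (huΛ hξ') (huΛ hζΛ)).1 h) (huΛ hζΛ)))
      (le_max_of_le_right ((le_max_left _ _).trans_eq (hTv ζ hζ)))

/-- Interleaving/pigeonhole step: if `d` is transitive on pairs below `κ⁺`,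
`B ⊆ γ` is cofinal of order type `λ⁺` with `d` bounded by `η₀ < λ` on pairs from
`B`, and `A ⊆ γ` is cofinal of order type `λ⁺`, then there is `A' ⊆ A` of
cardinality `λ⁺` and `η* < λ` with `d(α,α') ≤ η*` for all `α < α'` in `A'`. -/
theorem transitive_interleave (κ lam : Cardinal.{0})
    (hlamreg : lam.IsRegular) (hlam : lam < κ)
    (γ : Ordinal) (hγ : γ < (Order.succ κ).ord)
    (hγcof : γ.cof = Order.succ lam)
    (d : Ordinal → Ordinal → Ordinal)
    (hval : ∀ α β, α < β → β < (Order.succ κ).ord → d α β < lam.ord)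
    (htrans : ∀ α γ' β, α < γ' → γ' < β → β < (Order.succ κ).ord →
      d α β ≤ max (d α γ') (d γ' β))
    -- B, enumerated by b, is cofinal in γ of order type λ⁺ with d ≤ η₀ on its pairs :
    (b : Ordinal → Ordinal) (hb : StrictMonoOn b (Set.Iio (Order.succ lam).ord))
    (hbγ : ∀ i < (Order.succ lam).ord, b i < γ)
    (hbcof : ∀ x < γ, ∃ i < (Order.succ lam).ord, x < b i)
    (η₀ : Ordinal) (hη₀ : η₀ < lam.ord)
    (hBbdd : ∀ i j, i < j → j < (Order.succ lam).ord → d (b i) (b j) ≤ η₀)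
    -- A, enumerated by a, is cofinal in γ of order type λ⁺ :
    (a : Ordinal → Ordinal) (ha : StrictMonoOn a (Set.Iio (Order.succ lam).ord))
    (haγ : ∀ i < (Order.succ lam).ord, a i < γ)
    (hacof : ∀ x < γ, ∃ i < (Order.succ lam).ord, x < a i) :
    ∃ I : Set Ordinal, I ⊆ Set.Iio (Order.succ lam).ord ∧
      #I = Cardinal.lift.{1} (Order.succ lam) ∧
      ∃ ηstar < lam.ord, ∀ i ∈ I, ∀ j ∈ I, i < j → d (a i) (a j) ≤ ηstar :=
  transitive_interleave_general κ lam hlamreg γ hγ d hval htrans b hb hbγ hbcof η₀ hη₀ hBbdd a ha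
    haγ hacof
end
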